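/- arXiv:2103.02951 — 8 statements merged into one kernel-verified Lean document; each statement's English description precedes it below -/
import Mathlib

section
/- Let p be an odd prime and let α, z be p-adic integers such that ⟨−α⟩_p is even. Then Σ_{k=0}^{p−1} (α/2)_k ((3−α)/2)_k / (k!)² · z^k multiplied by Σ_{k=0}^{p−1} (α/2)_k ((1−α)/2)_k / (k!)² · z^k is congruent to Σ_{k=0}^{p−1} (α)_k (2−α)_k (1/2)_k / (k!)³ · z^k modulo p² (a congruence in ℤ_p, i.e. the difference lies in p²ℤ_p). -/
/-!
Put `A = α/2` and `B = (1 - α)/2`, so that `A + B = 1/2`. Clausen's identity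
`₂F₁[A, B; 1]² = ₃F₂[2A, 2B, 1/2; 1, 1]` holds coefficientwise (proved by the WZ method), and
since `B (B + 1)_i = (B + i) (B)_i`, symmetrizing the Cauchy product shows that
`₂F₁[A, B + 1; 1] · ₂F₁[A, B; 1] = ₃F₂[2A, 2B + 1, 1/2; 1, 1]` exactly. So the difference of the
truncated series is the sum of the product terms with `i, j < p ≤ i + j`. Writing `p = 2m + 1` and
`⟨-α⟩_p = 2s`, we have `A ≡ -s` and `B ≡ -(m - s) (mod p)`, so every such term contains a factor
`A + s` and a factor `B + (m - s)`, and its numerator is divisible by `p²` while the factorials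
in its denominator are `p`-adic units.
-/

open Finset Nat

-- `𝒫 n x` is the rising factorial `(x)_n`.
local notation "𝒫" n:max x:max => Polynomial.eval x (ascPochhammer _ n)

lemma mul_ascPochhammer_eval_add_one {R : Type*} [CommSemiring R] (b : R) (k : ℕ) :
    b * 𝒫 k (b + 1) = (b + k) * 𝒫 k b := by
  rw [mul_comm _ (𝒫 k b), ← ascPochhammer_succ_eval, ascPochhammer_succ_left]
  simp

lemma ascPochhammer_eval_eq_prod_range {R : Type*} [CommSemiring R] (n : ℕ) (x : R) :
    𝒫 n x = ∏ m ∈ range n, (x + m) := by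
  induction n with
  | zero => simp
  | succ n ih => rw [ascPochhammer_succ_eval, prod_range_succ, ih]

lemma Finset.Nat.sum_antidiagonal_telescope {M : Type*} [AddCommGroup M] (f : ℕ → ℕ → M)
    (n : ℕ) :
    ∑ p ∈ antidiagonal n, (f (p.1 + 1) p.2 - f p.1 (p.2 + 1)) = f (n + 1) 0 - f 0 (n + 1) := by
  rw [sum_sub_distrib, sub_eq_sub_iff_add_eq_add, add_comm,
    ← sum_antidiagonal_succ (f := fun p ↦ f p.1 p.2), sum_antidiagonal_succ']


theorem sum_range_mul_sum_range_sub_sum_range_antidiagonal {R : Type*} [CommRing R]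
    (a b : ℕ → R) (z : R) (n : ℕ) :
    (∑ i ∈ range n, a i * z ^ i) * (∑ j ∈ range n, b j * z ^ j)
      - ∑ k ∈ range n, (∑ p ∈ antidiagonal k, a p.1 * b p.2) * z ^ k
      = ∑ p ∈ range n ×ˢ range n with n ≤ p.1 + p.2, a p.1 * b p.2 * z ^ (p.1 + p.2) := by
  have fiber : ∀ k ∈ range n, {p ∈ range n ×ˢ range n | p.1 + p.2 = k} = antidiagonal k := by
    intro k hk
    ext p
    simp only [mem_range, mem_filter, mem_product, HasAntidiagonal.mem_antidiagonal] at hk ⊢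
    omega
  have low : ∑ k ∈ range n, (∑ p ∈ antidiagonal k, a p.1 * b p.2) * z ^ k
      = ∑ p ∈ range n ×ˢ range n with ¬ n ≤ p.1 + p.2, a p.1 * b p.2 * z ^ (p.1 + p.2) := by
    simp only [not_le, ← mem_range (n := n), ← sum_fiberwise_eq_sum_filter]
    refine sum_congr rfl fun k hk ↦ ?_
    rw [fiber k hk, sum_mul]
    exact sum_congr rfl fun p hp ↦ by rw [(HasAntidiagonal.mem_antidiagonal.mp hp)]
  have mul_eq (i j : ℕ) : a i * z ^ i * (b j * z ^ j) = a i * b j * z ^ (i + j) := by ring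
  rw [low, sum_mul_sum, ← sum_product', sum_congr rfl fun p _ ↦ mul_eq p.1 p.2,
    ← sum_filter_add_sum_filter_not _ (fun p : ℕ × ℕ ↦ n ≤ p.1 + p.2), add_sub_cancel_right]

section Coefficients

variable {K : Type*} [Field K]

-- The coefficients of `z^k` in `₂F₁[a, b; 1 | z]` and in `₃F₂[a, b, c; 1, 1 | z]`.
noncomputable def coeff₂F₁ (a b : K) (k : ℕ) : K := 𝒫 k a * 𝒫 k b / (k ! : K) ^ 2

noncomputable def coeff₃F₂ (a b c : K) (k : ℕ) : K := 𝒫 k a * 𝒫 k b * 𝒫 k c / (k ! : K) ^ 3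

@[simp] lemma coeff₂F₁_zero (a b : K) : coeff₂F₁ a b 0 = 1 := by simp [coeff₂F₁]

@[simp] lemma coeff₃F₂_zero (a b c : K) : coeff₃F₂ a b c 0 = 1 := by simp [coeff₃F₂]

lemma mul_coeff₂F₁_add_one (a b : K) (k : ℕ) :
    b * coeff₂F₁ a (b + 1) k = (b + k) * coeff₂F₁ a b k := by
  simp only [coeff₂F₁]
  linear_combination 𝒫 k a / (k ! : K) ^ 2 * mul_ascPochhammer_eval_add_one b k

lemma mul_coeff₃F₂_add_one (a b c : K) (k : ℕ) :
    b * coeff₃F₂ a (b + 1) c k = (b + k) * coeff₃F₂ a b c k := by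
  simp only [coeff₃F₂]
  linear_combination 𝒫 k a * 𝒫 k c / (k ! : K) ^ 3 * mul_ascPochhammer_eval_add_one b k

lemma two_mul_sum_antidiagonal_add_fst_mul (A B : K) (k : ℕ) :
    2 * ∑ p ∈ antidiagonal k, (B + p.1) * (coeff₂F₁ A B p.1 * coeff₂F₁ A B p.2)
      = (2 * B + k) * ∑ p ∈ antidiagonal k, coeff₂F₁ A B p.1 * coeff₂F₁ A B p.2 := by
  have swap : ∑ p ∈ antidiagonal k, (B + p.1) * (coeff₂F₁ A B p.1 * coeff₂F₁ A B p.2)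
      = ∑ p ∈ antidiagonal k, (B + p.2) * (coeff₂F₁ A B p.1 * coeff₂F₁ A B p.2) := by
    rw [← Finset.Nat.sum_antidiagonal_swap]
    simp only [Prod.fst_swap, Prod.snd_swap]
    exact sum_congr rfl fun p _ ↦ by ring
  rw [two_mul]
  nth_rw 2 [swap]
  rw [← sum_add_distrib, mul_sum]
  refine sum_congr rfl fun p hp ↦ ?_
  rw [← HasAntidiagonal.mem_antidiagonal.mp hp]
  push_cast
  ring

lemma coeff₂F₁_zero_right_succ (a : K) (j : ℕ) : coeff₂F₁ a 0 (j + 1) = 0 := by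
  simp [coeff₂F₁, ascPochhammer_ne_zero_eval_zero]

variable [CharZero K]

lemma coeff₂F₁_succ (a b : K) (k : ℕ) :
    coeff₂F₁ a b (k + 1) = (a + k) * (b + k) / (k + 1) ^ 2 * coeff₂F₁ a b k := by
  simp only [coeff₂F₁, ascPochhammer_succ_eval, factorial_succ, cast_mul, cast_succ]
  field_simp

lemma coeff₃F₂_succ (a b c : K) (k : ℕ) :
    coeff₃F₂ a b c (k + 1) = (a + k) * (b + k) * (c + k) / (k + 1) ^ 3 * coeff₃F₂ a b c k := by
  simp only [coeff₃F₂, ascPochhammer_succ_eval, factorial_succ, cast_mul, cast_succ]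
  field_simp

end Coefficients

section Clausen

variable {K : Type*} [Field K] [CharZero K] {A B : K}

/-- The WZ certificate of Clausen's identity, as produced by Zeilberger's algorithm. -/
noncomputable def clausenCert (A B : K) (i j : ℕ) : K :=
  (i : K) ^ 2 * (4 * i ^ 3 - 2 * (7 * (i + j) + 4) * i ^ 2
      + (16 * (i + j) ^ 2 + 17 * (i + j) + 3 + 4 * A * B) * i
      - 3 * (i + j) * (i + j + 1) * (2 * (i + j) + 1) - 6 * (i + j + 1) * A * B)
    / (2 * (j + 1) ^ 2) * (coeff₂F₁ A B i * coeff₂F₁ A B j)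

@[simp] lemma clausenCert_zero_left (A B : K) (j : ℕ) : clausenCert A B 0 j = 0 := by
  simp [clausenCert]

lemma clausenCert_wz (hAB : A + B = 1 / 2) (i j : ℕ) :
    (((i + j + 1 : ℕ) : K) + 1) ^ 3 * (coeff₂F₁ A B i * coeff₂F₁ A B (j + 2))
      - (2 * A + (i + j + 1 : ℕ)) * (2 * B + (i + j + 1 : ℕ)) * (1 / 2 + (i + j + 1 : ℕ))
        * (coeff₂F₁ A B i * coeff₂F₁ A B (j + 1))
      = clausenCert A B (i + 1) j - clausenCert A B i (j + 1) := by
  obtain rfl : B = 1 / 2 - A := by linear_combination hAB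
  have hi : (i : K) + 1 ≠ 0 := Nat.cast_add_one_ne_zero i
  have hj : (j : K) + 1 ≠ 0 := Nat.cast_add_one_ne_zero j
  have hj' : (j : K) + 1 + 1 ≠ 0 := by exact_mod_cast Nat.succ_ne_zero (j + 1)
  simp only [clausenCert, coeff₂F₁_succ]
  push_cast
  field_simp
  ring

lemma clausenCert_boundary (hAB : A + B = 1 / 2) (k : ℕ) :
    ((k : K) + 1) ^ 3 * (coeff₂F₁ A B (k + 1) * coeff₂F₁ A B 0 + coeff₂F₁ A B k * coeff₂F₁ A B 1)
      - (2 * A + k) * (2 * B + k) * (1 / 2 + k) * (coeff₂F₁ A B k * coeff₂F₁ A B 0)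
      = - clausenCert A B k 0 := by
  obtain rfl : B = 1 / 2 - A := by linear_combination hAB
  simp only [clausenCert, coeff₂F₁_succ, coeff₂F₁_zero]
  push_cast
  field_simp
  ring

lemma clausen_recurrence (hAB : A + B = 1 / 2) (k : ℕ) :
    ((k : K) + 1) ^ 3 * ∑ p ∈ antidiagonal (k + 1), coeff₂F₁ A B p.1 * coeff₂F₁ A B p.2
      = (2 * A + k) * (2 * B + k) * (1 / 2 + k)
        * ∑ p ∈ antidiagonal k, coeff₂F₁ A B p.1 * coeff₂F₁ A B p.2 := by
  have boundary := clausenCert_boundary hAB k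
  cases k with
  | zero =>
    simp only [sum_antidiagonal_succ', Nat.antidiagonal_zero, sum_singleton,
      clausenCert_zero_left] at boundary ⊢
    linear_combination boundary
  | succ n =>
    have wz : ∑ p ∈ antidiagonal n,
        ((((n + 1 : ℕ) : K) + 1) ^ 3 * (coeff₂F₁ A B p.1 * coeff₂F₁ A B (p.2 + 2))
          - (2 * A + (n + 1 : ℕ)) * (2 * B + (n + 1 : ℕ)) * (1 / 2 + (n + 1 : ℕ))
            * (coeff₂F₁ A B p.1 * coeff₂F₁ A B (p.2 + 1)))
        = clausenCert A B (n + 1) 0 - clausenCert A B 0 (n + 1) := by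
      rw [← sum_antidiagonal_telescope]
      refine sum_congr rfl fun p hp ↦ ?_
      rw [HasAntidiagonal.mem_antidiagonal] at hp
      subst hp
      exact clausenCert_wz hAB p.1 p.2
    rw [clausenCert_zero_left, sub_zero, sum_sub_distrib, ← mul_sum, ← mul_sum] at wz
    rw [sum_antidiagonal_succ', sum_antidiagonal_succ', sum_antidiagonal_succ' (n := n)]
    linear_combination boundary + wz

theorem clausen_coeff (hAB : A + B = 1 / 2) (k : ℕ) :
    ∑ p ∈ antidiagonal k, coeff₂F₁ A B p.1 * coeff₂F₁ A B p.2
      = coeff₃F₂ (2 * A) (2 * B) (1 / 2) k := by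
  induction k with
  | zero => simp
  | succ k ih =>
    have hk : (k : K) + 1 ≠ 0 := Nat.cast_add_one_ne_zero k
    apply mul_left_cancel₀ (pow_ne_zero 3 hk)
    rw [clausen_recurrence hAB, ih, coeff₃F₂_succ]
    field_simp

theorem orr_coeff (hAB : A + B = 1 / 2) (k : ℕ) :
    ∑ p ∈ antidiagonal k, coeff₂F₁ A (B + 1) p.1 * coeff₂F₁ A B p.2
      = coeff₃F₂ (2 * A) (2 * B + 1) (1 / 2) k := by
  by_cases hB : B = 0
  · obtain rfl : A = 1 / 2 := by simpa [hB] using hAB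
    subst hB
    cases k with
    | zero => simp
    | succ k =>
      rw [sum_antidiagonal_succ']
      simp only [coeff₂F₁_zero_right_succ, mul_zero, sum_const_zero, add_zero, coeff₂F₁_zero,
        mul_one]
      have two_mul_half : (2 : K) * (1 / 2) = 1 := by norm_num
      simp only [zero_add, two_mul_half, coeff₂F₁, coeff₃F₂, ascPochhammer_eval_one]
      field_simp
  · apply mul_left_cancel₀ (mul_ne_zero two_ne_zero hB)
    calc 2 * B * ∑ p ∈ antidiagonal k, coeff₂F₁ A (B + 1) p.1 * coeff₂F₁ A B p.2
        = 2 * ∑ p ∈ antidiagonal k, (B + p.1) * (coeff₂F₁ A B p.1 * coeff₂F₁ A B p.2) := by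
          simp only [mul_sum, mul_assoc, ← mul_assoc B, mul_coeff₂F₁_add_one]
      _ = 2 * B * coeff₃F₂ (2 * A) (2 * B + 1) (1 / 2) k := by
          rw [two_mul_sum_antidiagonal_add_fst_mul, clausen_coeff hAB, mul_coeff₃F₂_add_one]

end Clausen

section Ultrametric

variable {K : Type*} [NormedField K] [IsUltrametricDist K] {x : K}

lemma norm_add_natCast_le_one (hx : ‖x‖ ≤ 1) (m : ℕ) : ‖x + m‖ ≤ 1 :=
  (IsUltrametricDist.norm_add_le_max x m).trans
    (max_le hx (IsUltrametricDist.norm_natCast_le_one K m))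

lemma norm_le_one_of_norm_add_natCast_le_one {m : ℕ} (h : ‖x + m‖ ≤ 1) : ‖x‖ ≤ 1 := by
  simpa using norm_add_natCast_le_one (x := -(x + m)) (by rwa [norm_neg]) m

lemma norm_ascPochhammer_eval_le_one (hx : ‖x‖ ≤ 1) (n : ℕ) : ‖𝒫 n x‖ ≤ 1 := by
  rw [ascPochhammer_eval_eq_prod_range, norm_prod]
  exact prod_le_one (fun _ _ ↦ norm_nonneg _) fun m _ ↦ norm_add_natCast_le_one hx m

lemma norm_ascPochhammer_eval_le (hx : ‖x‖ ≤ 1) {m n : ℕ} (h : m < n) : ‖𝒫 n x‖ ≤ ‖x + m‖ := by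
  rw [ascPochhammer_eval_eq_prod_range, ← mul_prod_erase _ _ (mem_range.2 h), norm_mul, norm_prod]
  exact mul_le_of_le_one_right (norm_nonneg _)
    (prod_le_one (fun _ _ ↦ norm_nonneg _) fun m _ ↦ norm_add_natCast_le_one hx m)

lemma norm_ascPochhammer_eval_add_one_le (hx : ‖x‖ ≤ 1) {m n : ℕ} (hm : 0 < m) (h : m ≤ n) :
    ‖𝒫 n (x + 1)‖ ≤ ‖x + m‖ := by
  obtain ⟨m, rfl⟩ := Nat.exists_eq_add_of_lt hm
  have hx1 : ‖x + 1‖ ≤ 1 := by simpa using norm_add_natCast_le_one hx 1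
  simpa [add_assoc, add_comm (1 : K)] using norm_ascPochhammer_eval_le hx1 (m := m) (by omega)

lemma norm_orr_numerator_le {A B : K} (hA : ‖A‖ ≤ 1) (hB : ‖B‖ ≤ 1) {s t i j : ℕ}
    (hi : i < 2 * s + 2 * t + 1) (hij : 2 * s + 2 * t + 1 ≤ i + j) :
    ‖𝒫 i A * 𝒫 i (B + 1) * 𝒫 j A * 𝒫 j B‖ ≤ ‖A + s‖ * ‖B + t‖ := by
  have normA : ‖𝒫 i A * 𝒫 j A‖ ≤ ‖A + s‖ := by
    rw [norm_mul]
    rcases lt_or_ge s i with h | h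
    · simpa using mul_le_mul (norm_ascPochhammer_eval_le hA h)
        (norm_ascPochhammer_eval_le_one hA j) (norm_nonneg _) (norm_nonneg _)
    · simpa using mul_le_mul (norm_ascPochhammer_eval_le_one hA i)
        (norm_ascPochhammer_eval_le hA (by omega)) (norm_nonneg _) zero_le_one
  have normB : ‖𝒫 i (B + 1) * 𝒫 j B‖ ≤ ‖B + t‖ := by
    rw [norm_mul]
    rcases lt_or_ge t j with h | h
    · simpa using mul_le_mul (norm_ascPochhammer_eval_le_one
        (by simpa using norm_add_natCast_le_one hB 1) i)
        (norm_ascPochhammer_eval_le hB h) (norm_nonneg _) zero_le_one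
    · simpa using mul_le_mul (norm_ascPochhammer_eval_add_one_le hB (by omega) (by omega))
        (norm_ascPochhammer_eval_le_one hB j) (norm_nonneg _) (norm_nonneg _)
  calc ‖𝒫 i A * 𝒫 i (B + 1) * 𝒫 j A * 𝒫 j B‖
      = ‖𝒫 i A * 𝒫 j A‖ * ‖𝒫 i (B + 1) * 𝒫 j B‖ := by rw [← norm_mul]; ring_nf
    _ ≤ ‖A + s‖ * ‖B + t‖ := mul_le_mul normA normB (norm_nonneg _) (norm_nonneg _)

end Ultrametric

section Padic

variable {p : ℕ} [Fact p.Prime]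

lemma Padic.norm_factorial_eq_one {i : ℕ} (hi : i < p) : ‖(i ! : ℚ_[p])‖ = 1 := by
  rw [Padic.norm_natCast_eq_one_iff, Nat.Prime.coprime_iff_not_dvd Fact.out,
    Nat.Prime.dvd_factorial Fact.out]
  omega

lemma Padic.norm_div_two (hp : Odd p) (x : ℚ_[p]) : ‖x / 2‖ = ‖x‖ := by
  have h2 : ‖(2 : ℚ_[p])‖ = 1 := by
    simpa using Padic.norm_natCast_eq_one_iff.2 (Nat.coprime_two_right.2 hp)
  rw [norm_div, h2, div_one]

lemma PadicInt.norm_add_val_toZMod_neg_le (x : ℤ_[p]) :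
    ‖(x : ℚ_[p]) + (PadicInt.toZMod (-x)).val‖ ≤ (p : ℝ)⁻¹ := by
  have h := (-x).norm_sub_zmodRepr_lt_one
  rw [← PadicInt.val_toZMod_eq_zmodRepr] at h
  generalize (PadicInt.toZMod (-x)).val = r at h ⊢
  have h' : ‖(x : ℚ_[p]) + r‖ < (p : ℝ) ^ (-1 + 1 : ℤ) := by
    rw [← norm_neg, PadicInt.norm_def] at h
    simpa [add_comm] using h
  simpa using (Padic.norm_le_pow_iff_norm_lt_pow_add_one _ (-1)).2 h'

lemma norm_coeff₂F₁_mul_coeff₂F₁_le {A B : ℚ_[p]} (hA : ‖A‖ ≤ 1) (hB : ‖B‖ ≤ 1) {s t i j : ℕ}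
    (hp : p = 2 * s + 2 * t + 1) (hi : i < p) (hj : j < p) (hij : p ≤ i + j) :
    ‖coeff₂F₁ A (B + 1) i * coeff₂F₁ A B j‖ ≤ ‖A + s‖ * ‖B + t‖ := by
  have h : coeff₂F₁ A (B + 1) i * coeff₂F₁ A B j
      = 𝒫 i A * 𝒫 i (B + 1) * 𝒫 j A * 𝒫 j B / ((i ! : ℚ_[p]) ^ 2 * (j ! : ℚ_[p]) ^ 2) := by
    simp only [coeff₂F₁]
    ring
  rw [h, norm_div, norm_mul ((i ! : ℚ_[p]) ^ 2), norm_pow, norm_pow, Padic.norm_factorial_eq_one hi,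
    Padic.norm_factorial_eq_one hj, one_pow, one_mul, div_one]
  exact norm_orr_numerator_le hA hB (hp ▸ hi) (hp ▸ hij)

theorem norm_orr_truncation_sub_le {A B : ℚ_[p]} (hAB : A + B = 1 / 2) {s t : ℕ}
    (hp : p = 2 * s + 2 * t + 1) (hAs : ‖A + s‖ ≤ (p : ℝ)⁻¹) (hBt : ‖B + t‖ ≤ (p : ℝ)⁻¹)
    {z : ℚ_[p]} (hz : ‖z‖ ≤ 1) :
    ‖(∑ k ∈ range p, coeff₂F₁ A (B + 1) k * z ^ k) * (∑ k ∈ range p, coeff₂F₁ A B k * z ^ k)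
      - ∑ k ∈ range p, coeff₃F₂ (2 * A) (2 * B + 1) (1 / 2) k * z ^ k‖ ≤ (p : ℝ) ^ (-2 : ℤ) := by
  have hp1 : (p : ℝ)⁻¹ ≤ 1 := inv_le_one_of_one_le₀ (mod_cast (Fact.out : p.Prime).one_le)
  have hA := norm_le_one_of_norm_add_natCast_le_one (hAs.trans hp1)
  have hB := norm_le_one_of_norm_add_natCast_le_one (hBt.trans hp1)
  simp only [← orr_coeff hAB]
  rw [sum_range_mul_sum_range_sub_sum_range_antidiagonal]
  refine IsUltrametricDist.norm_sum_le_of_forall_le_of_nonneg (by positivity) fun q hq ↦ ?_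
  simp only [mem_filter, mem_product, mem_range] at hq
  calc ‖coeff₂F₁ A (B + 1) q.1 * coeff₂F₁ A B q.2 * z ^ (q.1 + q.2)‖
      ≤ ‖A + s‖ * ‖B + t‖ * 1 := by
        rw [norm_mul, norm_pow]
        exact mul_le_mul (norm_coeff₂F₁_mul_coeff₂F₁_le hA hB hp hq.1.1 hq.1.2 hq.2)
          (pow_le_one₀ (norm_nonneg _) hz) (by positivity) (by positivity)
    _ ≤ (p : ℝ)⁻¹ * (p : ℝ)⁻¹ * 1 := by gcongr
    _ = (p : ℝ) ^ (-2 : ℤ) := by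
        rw [mul_one, ← zpow_neg_one, ← zpow_add₀ (mod_cast (Fact.out : p.Prime).ne_zero)]
        norm_num

end Padic

/-- **Theorem 1.1 (Orr-type congruence).** For an odd prime `p` and `α, z ∈ ℤ_p` with
`⟨-α⟩_p` even, the product of the truncated `₂F₁[α/2, (3-α)/2; 1 | z]` and
`₂F₁[α/2, (1-α)/2; 1 | z]` is congruent to the truncated `₃F₂[α, 2-α, 1/2; 1, 1 | z]`
modulo `p²` (the difference, computed in `ℚ_p`, lies in `p²ℤ_p`). -/
theorem orr_congruence (p : ℕ) [Fact p.Prime] (hp : Odd p) (α z : ℤ_[p])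
    (hα : Even ((PadicInt.toZMod (-α)).val)) :
    ‖(∑ k ∈ Finset.range p,
          (ascPochhammer ℚ_[p] k).eval ((α : ℚ_[p]) / 2) *
            (ascPochhammer ℚ_[p] k).eval ((3 - (α : ℚ_[p])) / 2) /
              ((k.factorial : ℚ_[p]))^2 * (z : ℚ_[p])^k) *
        (∑ k ∈ Finset.range p,
          (ascPochhammer ℚ_[p] k).eval ((α : ℚ_[p]) / 2) *
            (ascPochhammer ℚ_[p] k).eval ((1 - (α : ℚ_[p])) / 2) /
              ((k.factorial : ℚ_[p]))^2 * (z : ℚ_[p])^k) -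
      ∑ k ∈ Finset.range p,
          (ascPochhammer ℚ_[p] k).eval (α : ℚ_[p]) *
            (ascPochhammer ℚ_[p] k).eval (2 - (α : ℚ_[p])) *
              (ascPochhammer ℚ_[p] k).eval (1 / 2) /
                ((k.factorial : ℚ_[p]))^3 * (z : ℚ_[p])^k‖
      ≤ (p : ℝ) ^ (-2 : ℤ) := by
  have hr := PadicInt.norm_add_val_toZMod_neg_le α
  obtain ⟨s, hs⟩ := hα
  obtain ⟨m, hm⟩ := id hp
  have hsm : s ≤ m := by have := ZMod.val_lt (PadicInt.toZMod (-α)); omega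
  rw [hs] at hr
  have hA : ‖(α : ℚ_[p]) / 2 + s‖ ≤ (p : ℝ)⁻¹ := by
    rw [show (α : ℚ_[p]) / 2 + s = ((α : ℚ_[p]) + (s + s : ℕ)) / 2 by push_cast; ring,
      Padic.norm_div_two hp]
    exact hr
  have hB : ‖(1 - (α : ℚ_[p])) / 2 + (m - s : ℕ)‖ ≤ (p : ℝ)⁻¹ := by
    have hpm : (p : ℚ_[p]) = 2 * m + 1 := by exact_mod_cast hm
    rw [show (1 - (α : ℚ_[p])) / 2 + (m - s : ℕ) = ((p : ℚ_[p]) + -(α + (s + s : ℕ))) / 2 by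
      push_cast [Nat.cast_sub hsm]; linear_combination (-1 / 2 : ℚ_[p]) * hpm,
      Padic.norm_div_two hp]
    exact (IsUltrametricDist.norm_add_le_max _ _).trans
      (max_le Padic.norm_p.le (by rwa [norm_neg]))
  have key := norm_orr_truncation_sub_le (by ring) (by omega : p = 2 * s + 2 * (m - s) + 1) hA hB
    ((PadicInt.padic_norm_e_of_padicInt z).trans_le z.norm_le_one)
  rwa [show (1 - (α : ℚ_[p])) / 2 + 1 = (3 - α) / 2 by ring, show 2 * ((α : ℚ_[p]) / 2) = α by ring,
    show 2 * ((1 - (α : ℚ_[p])) / 2) + 1 = 2 - α by ring] at key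
end

section
/- Let b be a positive integer and let p be a prime with p ≡ 1 (mod b) or p ≡ −1 (mod b), such that ⟨−1/b⟩_p is even. Then Σ_{k=0}^{p−1} (b²k + b − 1) · (C(2k,k)/4^k) · C(−1/b, k) · C(1/b − 1, k) ≡ 0 (mod p²), where the sum is a rational number that is a p-adic integer and the congruence is in ℤ_p. -/
open Finset

/-- The generalized binomial coefficient `C(x, k) = x(x-1)⋯(x-k+1)/k!` for `x : ℚ`. -/
noncomputable def genBinom (x : ℚ) (k : ℕ) : ℚ :=
  (descPochhammer ℚ k).eval x / (k.factorial : ℚ)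

/-!
With `a = 1/b` the sum is `b² Ψ(a)`, where
`Ψ(y) = Σ_{k<p} (k + y - y²) (C(2k,k)/4^k) (y)_k (1-y)_k / k!²`
is a polynomial with `p`-integral coefficients and `Ψ(1 - y) = Ψ(y)`.
A WZ pair yields a recurrence for `Ψ(m + 1)`, `m ∈ ℕ`, whose solution vanishes at every even `m`.
With `r = ⟨-1/b⟩_p` even and `p` odd, `Ψ` therefore vanishes at the integers `p - r` and `-r`.
Both are `≡ a (mod p)`, so factoring them out of `Ψ` gives `Ψ(a) ≡ 0 (mod p²)`.
-/

open Polynomial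
open scoped Nat

theorem ascPochhammer_eval_add_one_mul {S : Type*} [CommSemiring S] (k : ℕ) (y : S) :
    (ascPochhammer S k).eval (y + 1) * y = (ascPochhammer S k).eval y * (y + k) := by
  rw [← ascPochhammer_succ_eval, ascPochhammer_succ_left, eval_mul, eval_comp]
  simp [mul_comm]

namespace SunCongruence

noncomputable def centralBinomDiv (k : ℕ) : ℚ := k.centralBinom / 4 ^ k

lemma centralBinomDiv_succ (k : ℕ) :
    centralBinomDiv (k + 1) = centralBinomDiv k * (2 * k + 1) / (2 * (k + 1)) := by
  have h : ((k + 1) * (k + 1).centralBinom : ℚ) = 2 * (2 * k + 1) * k.centralBinom := by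
    exact_mod_cast Nat.succ_mul_centralBinom_succ k
  rw [centralBinomDiv, centralBinomDiv, pow_succ]
  field_simp
  linear_combination 2 * h

noncomputable def sunTerm (y : ℚ) (k : ℕ) : ℚ :=
  (k + y - y ^ 2) * centralBinomDiv k * (ascPochhammer ℚ k).eval y *
    (ascPochhammer ℚ k).eval (1 - y) / (k ! : ℚ) ^ 2

-- The WZ certificate of `sunTerm` for the recurrence of `sunTerm_wz` (Zeilberger's algorithm).
noncomputable def sunCert (y : ℚ) (k : ℕ) : ℚ :=
  4 * centralBinomDiv k * (ascPochhammer ℚ k).eval y * (ascPochhammer ℚ k).eval (-(y + 2)) *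
    k ^ 3 * (k ^ 2 - (y ^ 2 + 2 * y + 3) * k + 1 - 2 * (y + 1) ^ 4) /
    ((k ! : ℚ) ^ 2 * (y * (y + 1) * (y + 2)))

lemma sunTerm_wz {y : ℚ} (h0 : y ≠ 0) (h1 : y + 1 ≠ 0) (h2 : y + 2 ≠ 0) (k : ℕ) :
    (y + 1) ^ 2 * sunTerm y k + (y + 2) ^ 2 * sunTerm (y + 1) k - y ^ 2 * sunTerm (y + 2) k
      - (y + 1) ^ 2 * sunTerm (y + 3) k = sunCert y (k + 1) - sunCert y k := by
  have shift (z : ℚ) (hz : z ≠ 0) :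
      (ascPochhammer ℚ k).eval (z + 1) = (ascPochhammer ℚ k).eval z * (z + k) / z := by
    rw [eq_div_iff hz, ascPochhammer_eval_add_one_mul]
  have shift' (z : ℚ) (hz : z ≠ 0) :
      (ascPochhammer ℚ k).eval (1 - z) = (ascPochhammer ℚ k).eval (1 - (z + 1)) * (k - z) / -z := by
    rw [eq_div_iff (neg_ne_zero.2 hz), show 1 - z = -z + 1 by ring, ascPochhammer_eval_add_one_mul]
    ring_nf
  have h2' : y + 1 + 1 ≠ 0 := by rwa [add_assoc, one_add_one_eq_two]
  -- express every Pochhammer value through `(y)_k` and `(-y-2)_k`, dividing only by `y, y+1, y+2`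
  unfold sunTerm sunCert
  rw [show y + 3 = y + 1 + 1 + 1 by ring, show y + 2 = y + 1 + 1 by ring,
    show -(y + 1 + 1) = 1 - (y + 1 + 1 + 1) by ring,
    shift (y + 1 + 1) h2', shift (y + 1) h1, shift y h0, shift' y h0, shift' (y + 1) h1,
    shift' (y + 1 + 1) h2', ascPochhammer_succ_eval, ascPochhammer_succ_eval,
    centralBinomDiv_succ, Nat.factorial_succ]
  push_cast
  field_simp
  ring

lemma sunTerm_eq_zero {m k : ℕ} (h : m < k) : sunTerm (m + 1) k = 0 := by
  rw [sunTerm, show (1 : ℚ) - (m + 1) = -(m : ℚ) by ring, ascPochhammer_eval_neg_coe_nat_of_lt h]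
  simp

lemma sunCert_zero (y : ℚ) : sunCert y 0 = 0 := by
  simp [sunCert]

lemma sunCert_eq_zero {m N : ℕ} (h : m + 3 < N) : sunCert (m + 1) N = 0 := by
  rw [sunCert, show -((m : ℚ) + 1 + 2) = -((m + 3 : ℕ) : ℚ) by push_cast; ring,
    ascPochhammer_eval_neg_coe_nat_of_lt h]
  simp

noncomputable def sunValue (m : ℕ) : ℚ := ∑ k ∈ range (m + 1), sunTerm (m + 1) k

lemma sum_sunTerm_eq_sunValue {m N : ℕ} (h : m + 1 ≤ N) :
    ∑ k ∈ range N, sunTerm (m + 1) k = sunValue m :=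
  (sum_subset (range_subset_range.2 h) fun _ _ hk ↦
    sunTerm_eq_zero (by simpa using hk)).symm

lemma sunValue_recurrence (m : ℕ) :
    ((m : ℚ) + 2) ^ 2 * sunValue m + ((m : ℚ) + 3) ^ 2 * sunValue (m + 1)
      - ((m : ℚ) + 1) ^ 2 * sunValue (m + 2) - ((m : ℚ) + 2) ^ 2 * sunValue (m + 3) = 0 := by
  have hwz := sum_congr rfl fun k (_ : k ∈ range (m + 4)) ↦
    sunTerm_wz (y := (m : ℚ) + 1) (by positivity) (by positivity) (by positivity) k
  rw [sum_range_sub (sunCert _), sunCert_zero, sunCert_eq_zero (by omega), sub_zero] at hwz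
  simp only [sum_add_distrib, sum_sub_distrib, ← mul_sum] at hwz
  rw [show (m : ℚ) + 1 + 1 = ((m + 1 : ℕ) : ℚ) + 1 by push_cast; ring,
    show (m : ℚ) + 1 + 2 = ((m + 2 : ℕ) : ℚ) + 1 by push_cast; ring,
    show (m : ℚ) + 1 + 3 = ((m + 3 : ℕ) : ℚ) + 1 by push_cast; ring,
    sum_sunTerm_eq_sunValue (m := m) (N := m + 4) (by omega),
    sum_sunTerm_eq_sunValue (m := m + 1) (N := m + 4) (by omega),
    sum_sunTerm_eq_sunValue (m := m + 2) (N := m + 4) (by omega),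
    sum_sunTerm_eq_sunValue (m := m + 3) (N := m + 4) (by omega)] at hwz
  push_cast at hwz
  linear_combination hwz

-- The odd values are carried along because the recurrence has order three.
lemma sunValue_closed_form (j : ℕ) :
    sunValue (2 * j) = 0 ∧ sunValue (2 * j + 1) = -((2 * j + 1) * centralBinomDiv j) ^ 2 ∧
      sunValue (2 * j + 2) = 0 := by
  induction j with
  | zero =>
    refine ⟨?_, ?_, ?_⟩ <;>
      norm_num [sunValue, sunTerm, sum_range_succ, ascPochhammer_succ_eval, centralBinomDiv,
        Nat.centralBinom, Nat.choose]
  | succ j ih =>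
    obtain ⟨h0, h1, h2⟩ := ih
    have hu : centralBinomDiv (j + 1) * (2 * (j + 1)) = centralBinomDiv j * (2 * j + 1) := by
      rw [centralBinomDiv_succ]; field_simp
    have hu2 : ((2 * j + 2) * centralBinomDiv (j + 1)) ^ 2 =
        ((2 * j + 1) * centralBinomDiv j) ^ 2 := by
      linear_combination
        (centralBinomDiv (j + 1) * (2 * (j + 1)) + centralBinomDiv j * (2 * j + 1)) * hu
    have hrec₁ := sunValue_recurrence (2 * j)
    have hrec₂ := sunValue_recurrence (2 * j + 1)
    push_cast at hrec₁ hrec₂ h1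
    rw [h0, h1, h2] at hrec₁
    have h3 : sunValue (2 * j + 3) = -((2 * (j + 1 : ℕ) + 1) * centralBinomDiv (j + 1)) ^ 2 := by
      apply mul_left_cancel₀ (pow_ne_zero 2 (by positivity : (2 * (j : ℚ) + 2) ≠ 0))
      push_cast
      linear_combination -hrec₁ + (2 * j + 3) ^ 2 * hu2
    rw [show 2 * j + 1 + 1 = 2 * j + 2 by ring, show 2 * j + 1 + 2 = 2 * j + 3 by ring,
      show 2 * j + 1 + 3 = 2 * j + 4 by ring, h1, h2, h3] at hrec₂
    refine ⟨h2, h3, ?_⟩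
    apply mul_left_cancel₀ (pow_ne_zero 2 (by positivity : (2 * (j : ℚ) + 3) ≠ 0))
    push_cast at hrec₂ ⊢
    linear_combination -hrec₂ + (2 * j + 3) ^ 2 * hu2

lemma sunTerm_one_sub (y : ℚ) (k : ℕ) : sunTerm (1 - y) k = sunTerm y k := by
  rw [sunTerm, sunTerm, sub_sub_cancel]
  ring

lemma sum_sunTerm_eq_zero_of_even {m N : ℕ} (hm : Even m) (h : m + 1 ≤ N) :
    ∑ k ∈ range N, sunTerm (m + 1) k = 0 := by
  obtain ⟨j, rfl⟩ := hm
  rw [sum_sunTerm_eq_sunValue h, ← two_mul]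
  exact (sunValue_closed_form j).1

noncomputable def sunPoly (N : ℕ) : ℤ[X] :=
  ∑ k ∈ range N, C ((k.centralBinom * 4 ^ (N - 1 - k) * ((N - 1)! / k !) ^ 2 : ℕ) : ℤ) *
    ((k : ℤ[X]) + X - X ^ 2) * ascPochhammer ℤ k * (ascPochhammer ℤ k).comp (1 - X)

lemma aeval_sunPoly (N : ℕ) (y : ℚ) :
    aeval y (sunPoly N) = 4 ^ (N - 1) * ((N - 1)! : ℚ) ^ 2 * ∑ k ∈ range N, sunTerm y k := by
  rw [sunPoly, map_sum, mul_sum]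
  refine sum_congr rfl fun k hk ↦ ?_
  have hkN : k ≤ N - 1 := by have := mem_range.1 hk; omega
  have hfac : (((N - 1)! / k ! : ℕ) : ℚ) = (N - 1)! / k ! :=
    Nat.cast_div (Nat.factorial_dvd_factorial hkN) (by positivity)
  have hpow : (4 : ℚ) ^ (N - 1 - k) = 4 ^ (N - 1) / 4 ^ k := by
    rw [pow_sub₀ _ (by norm_num) hkN, div_eq_mul_inv]
  simp only [map_mul, map_sub, map_add, map_natCast, map_pow, aeval_def,
    eval₂_comp, ← ascPochhammer_eval₂, eval₂_sub, eval₂_one, eval₂_X, algebraMap_int_eq]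
  push_cast [hfac, hpow]
  rw [sunTerm, centralBinomDiv]
  field_simp

section Padic

variable {p : ℕ} [Fact p.Prime]

lemma norm_aeval_le_one (P : ℤ[X]) {x : ℚ_[p]} (hx : ‖x‖ ≤ 1) : ‖aeval x P‖ ≤ 1 := by
  obtain ⟨z, rfl⟩ : ∃ z : ℤ_[p], (z : ℚ_[p]) = x := ⟨⟨x, hx⟩, rfl⟩
  rw [← PadicInt.algebraMap_apply, aeval_algebraMap_apply, PadicInt.algebraMap_apply]
  exact PadicInt.norm_le_one _

lemma norm_aeval_le_of_isRoot {P : ℤ[X]} {α β : ℤ} (hαβ : α ≠ β) (hα : P.IsRoot α)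
    (hβ : P.IsRoot β) {x : ℚ_[p]} (hx : ‖x‖ ≤ 1) : ‖aeval x P‖ ≤ ‖x - α‖ * ‖x - β‖ := by
  have hQ : (P /ₘ (X - C α)).IsRoot β := by
    rw [← mul_divByMonic_eq_iff_isRoot.2 hα, IsRoot, eval_mul] at hβ
    simpa [sub_ne_zero.2 hαβ.symm] using hβ
  rw [← mul_divByMonic_eq_iff_isRoot.2 hα, ← mul_divByMonic_eq_iff_isRoot.2 hQ]
  simp only [map_mul, map_sub, aeval_X, norm_mul, ← mul_assoc]
  rw [aeval_C, aeval_C, algebraMap_int_eq, eq_intCast, eq_intCast]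
  exact mul_le_of_le_one_right (by positivity) (norm_aeval_le_one _ hx)

lemma norm_natCast_eq_one_of_ne_zero {b : ℕ} (hb : (b : ZMod p) ≠ 0) : ‖(b : ℚ_[p])‖ = 1 := by
  rw [Padic.norm_natCast_eq_one_iff, Nat.Prime.coprime_iff_not_dvd Fact.out,
    ← ZMod.natCast_eq_zero_iff]
  exact hb

lemma norm_inv_natCast_sub_intCast_le {b : ℕ} {z : ℤ} (h : (z : ZMod p) * b = 1) :
    ‖(b : ℚ_[p])⁻¹ - z‖ ≤ (p : ℝ)⁻¹ := by
  have hb := norm_natCast_eq_one_of_ne_zero (right_ne_zero_of_mul_eq_one h)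
  have hdvd : ((p ^ 1 : ℕ) : ℤ) ∣ 1 - z * b := by
    rw [pow_one, ← ZMod.intCast_zmod_eq_zero_iff_dvd]
    push_cast
    rw [h, sub_self]
  have hb0 : (b : ℚ_[p]) ≠ 0 := by rw [← norm_ne_zero_iff, hb]; exact one_ne_zero
  rw [show (b : ℚ_[p])⁻¹ - z = ((1 - z * b : ℤ) : ℚ_[p]) / b by push_cast; field_simp,
    norm_div, hb, div_one, ← zpow_neg_one]
  exact_mod_cast (Padic.norm_int_le_pow_iff_dvd _ 1).2 (by exact_mod_cast hdvd)

end Padic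

lemma norm_sum_sunTerm_le {p : ℕ} [Fact p.Prime] (hp : Odd p) {a : ℚ} (ha : ‖(a : ℚ_[p])‖ ≤ 1)
    {α β : ℤ} (hαβ : α ≠ β) (hα : ∑ k ∈ range p, sunTerm α k = 0)
    (hβ : ∑ k ∈ range p, sunTerm β k = 0) :
    ‖((∑ k ∈ range p, sunTerm a k : ℚ) : ℚ_[p])‖ ≤ ‖(a : ℚ_[p]) - α‖ * ‖(a : ℚ_[p]) - β‖ := by
  have hroot {z : ℤ} (hz : ∑ k ∈ range p, sunTerm z k = 0) : (sunPoly p).IsRoot z := by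
    have h := aeval_sunPoly p z
    rw [hz, mul_zero, aeval_def, eval₂_at_intCast] at h
    simpa using h
  have hp' : p.Prime := Fact.out
  have hunit : ‖((4 ^ (p - 1) * (p - 1)! ^ 2 : ℕ) : ℚ_[p])‖ = 1 := by
    rw [Padic.norm_natCast_eq_one_iff, show 4 = 2 ^ 2 by rfl]
    refine .mul_right (.pow_right _ (.pow_right _ hp.coprime_two_right)) (.pow_right _ ?_)
    exact hp'.coprime_iff_not_dvd.2 (by rw [hp'.dvd_factorial]; have := hp'.pos; omega)
  have h := congrArg (algebraMap ℚ ℚ_[p]) (aeval_sunPoly p a)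
  rw [← aeval_algebraMap_apply, eq_ratCast, map_mul, eq_ratCast, eq_ratCast] at h
  push_cast at h hunit
  calc ‖((∑ k ∈ range p, sunTerm a k : ℚ) : ℚ_[p])‖ = ‖aeval (a : ℚ_[p]) (sunPoly p)‖ := by
        rw [h, norm_mul, hunit, one_mul, Rat.cast_sum]
    _ ≤ _ := norm_aeval_le_of_isRoot hαβ (hroot hα) (hroot hβ) ha

lemma sum_sunTerm_sub_eq_zero {p r : ℕ} (hp : Odd p) (hr : Even r) (h : r < p) :
    ∑ k ∈ range p, sunTerm ((p : ℚ) - r) k = 0 := by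
  have hm : Even (p - r - 1) := by
    obtain ⟨j, hj⟩ := hr; obtain ⟨i, hi⟩ := hp; exact ⟨i - j, by omega⟩
  rw [show (p : ℚ) - r = ((p - r - 1 : ℕ) : ℚ) + 1 by
    rw [Nat.cast_sub (by omega), Nat.cast_sub h.le]; push_cast; ring]
  exact sum_sunTerm_eq_zero_of_even hm (by omega)

lemma sum_sunTerm_neg_eq_zero {r N : ℕ} (hr : Even r) (h : r < N) :
    ∑ k ∈ range N, sunTerm (-r) k = 0 := by
  simp_rw [show -(r : ℚ) = 1 - (r + 1) by ring, sunTerm_one_sub]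
  exact sum_sunTerm_eq_zero_of_even hr h

lemma odd_of_even_val_neg_inv {p : ℕ} [Fact p.Prime] {b : ZMod p} (hb : b ≠ 0)
    (heven : Even (-b⁻¹).val) : Odd p := by
  refine (Fact.out : p.Prime).odd_of_ne_two ?_
  rintro rfl
  have h0 : (-b⁻¹).val = 0 := by
    obtain ⟨j, hj⟩ := heven; have := ZMod.val_lt (-b⁻¹); omega
  simp [ZMod.val_eq_zero, hb] at h0

lemma norm_sum_sunTerm_inv_le {p b : ℕ} [Fact p.Prime] (hb : (b : ZMod p) ≠ 0)
    (heven : Even (-(b : ZMod p)⁻¹).val) :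
    ‖((∑ k ∈ range p, sunTerm (b : ℚ)⁻¹ k : ℚ) : ℚ_[p])‖ ≤ (p : ℝ) ^ (-2 : ℤ) := by
  set r := (-(b : ZMod p)⁻¹).val
  have hr : (r : ZMod p) = -(b : ZMod p)⁻¹ := ZMod.natCast_zmod_val _
  have hrp : r < p := ZMod.val_lt _
  have hp := odd_of_even_val_neg_inv hb heven
  -- both roots `p - r` and `-r` are congruent to `1 / b` modulo `p`
  have hαb : ((p - r : ℤ) : ZMod p) * b = 1 := by
    push_cast; rw [ZMod.natCast_self, hr, zero_sub, neg_neg, inv_mul_cancel₀ hb]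
  have hβb : ((-r : ℤ) : ZMod p) * b = 1 := by
    push_cast; rw [hr, neg_neg, inv_mul_cancel₀ hb]
  have ha : ‖(((b : ℚ)⁻¹ : ℚ) : ℚ_[p])‖ ≤ 1 := by
    push_cast; rw [norm_inv, norm_natCast_eq_one_of_ne_zero hb, inv_one]
  calc ‖((∑ k ∈ range p, sunTerm (b : ℚ)⁻¹ k : ℚ) : ℚ_[p])‖
      ≤ ‖(((b : ℚ)⁻¹ : ℚ) : ℚ_[p]) - (p - r : ℤ)‖ * ‖(((b : ℚ)⁻¹ : ℚ) : ℚ_[p]) - (-r : ℤ)‖ :=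
        norm_sum_sunTerm_le hp ha (by omega)
          (by exact_mod_cast sum_sunTerm_sub_eq_zero hp heven hrp)
          (by exact_mod_cast sum_sunTerm_neg_eq_zero heven hrp)
    _ ≤ (p : ℝ)⁻¹ * (p : ℝ)⁻¹ := by
        push_cast only [Rat.cast_inv, Rat.cast_natCast]
        gcongr
        exacts [norm_inv_natCast_sub_intCast_le hαb, norm_inv_natCast_sub_intCast_le hβb]
    _ = (p : ℝ) ^ (-2 : ℤ) := by rw [← mul_inv, ← sq, zpow_neg, zpow_ofNat]

lemma genBinom_neg_mul_genBinom_sub_one (a : ℚ) (k : ℕ) :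
    genBinom (-a) k * genBinom (a - 1) k =
      (ascPochhammer ℚ k).eval a * (ascPochhammer ℚ k).eval (1 - a) / (k ! : ℚ) ^ 2 := by
  have h₁ := ascPochhammer_eval_neg_eq_descPochhammer ℚ (-a) k
  have h₂ := ascPochhammer_eval_neg_eq_descPochhammer ℚ (a - 1) k
  rw [neg_neg] at h₁
  rw [neg_sub] at h₂
  rw [genBinom, genBinom, h₁, h₂, mul_mul_mul_comm, ← mul_pow, neg_one_mul, neg_neg, one_pow,
    one_mul]
  ring

lemma summand_eq_sq_mul_sunTerm {b : ℚ} (hb : b ≠ 0) (k : ℕ) :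
    (b ^ 2 * k + b - 1) * ((Nat.choose (2 * k) k : ℚ) / 4 ^ k) * genBinom (-1 / b) k *
      genBinom (1 / b - 1) k = b ^ 2 * sunTerm b⁻¹ k := by
  rw [mul_assoc _ (genBinom _ k), neg_div, one_div, genBinom_neg_mul_genBinom_sub_one, sunTerm,
    centralBinomDiv, Nat.centralBinom]
  field_simp

lemma natCast_ne_zero_of_modEq_one_or_neg_one {p b : ℕ} [Fact p.Prime]
    (h : (p : ℤ) ≡ 1 [ZMOD b] ∨ (p : ℤ) ≡ -1 [ZMOD b]) : (b : ZMod p) ≠ 0 := by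
  intro hb
  have hpb := Int.natCast_dvd_natCast.2 ((ZMod.natCast_eq_zero_iff _ _).1 hb)
  replace h := h.imp (·.of_dvd hpb) (·.of_dvd hpb)
  simp [← ZMod.intCast_eq_intCast_iff] at h

end SunCongruence

open SunCongruence in
theorem sun_conjecture_n_eq_one_general (b : ℕ) (p : ℕ) [Fact p.Prime]
    (hpb : (p : ℤ) ≡ 1 [ZMOD (b : ℤ)] ∨ (p : ℤ) ≡ -1 [ZMOD (b : ℤ)])
    (heven : Even ((-(b : ZMod p)⁻¹ : ZMod p)).val) :
    ‖((∑ k ∈ Finset.range p,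
        ((b : ℚ)^2 * k + b - 1) * ((Nat.choose (2 * k) k : ℚ) / 4 ^ k) *
          genBinom (-1 / b) k * genBinom (1 / b - 1) k : ℚ) : ℚ_[p])‖
      ≤ (p : ℝ) ^ (-2 : ℤ) := by
  have hb := natCast_ne_zero_of_modEq_one_or_neg_one hpb
  have hb0 : (b : ℚ) ≠ 0 := Nat.cast_ne_zero.2 (by rintro rfl; exact hb Nat.cast_zero)
  rw [sum_congr rfl fun k _ ↦ summand_eq_sq_mul_sunTerm hb0 k, ← mul_sum, Rat.cast_mul, norm_mul]
  push_cast only [Rat.cast_pow, Rat.cast_natCast]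
  rw [norm_pow, norm_natCast_eq_one_of_ne_zero hb, one_pow, one_mul]
  exact norm_sum_sunTerm_inv_le hb heven

/-- **Corollary 1.1.** Let `b` be a positive integer and `p` a prime with `p ≡ ±1 (mod b)`
and `⟨-1/b⟩_p` even. Then
`Σ_{k=0}^{p-1} (b²k + b - 1) (C(2k,k)/4^k) C(-1/b,k) C(1/b-1,k) ≡ 0 (mod p²)`,
the sum being a rational number viewed in `ℚ_p` and the congruence holding in `ℤ_p`. -/
theorem sun_conjecture_n_eq_one (b : ℕ) (hb : 0 < b) (p : ℕ) [Fact p.Prime]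
    (hpb : (p : ℤ) ≡ 1 [ZMOD (b : ℤ)] ∨ (p : ℤ) ≡ -1 [ZMOD (b : ℤ)])
    (heven : Even ((-(b : ZMod p)⁻¹ : ZMod p)).val) :
    ‖((∑ k ∈ Finset.range p,
        ((b : ℚ)^2 * k + b - 1) * ((Nat.choose (2 * k) k : ℚ) / 4 ^ k) *
          genBinom (-1 / b) k * genBinom (1 / b - 1) k : ℚ) : ℚ_[p])‖
      ≤ (p : ℝ) ^ (-2 : ℤ) :=
  sun_conjecture_n_eq_one_general b p hpb heven
end

section
/- Let p > 3 be a prime and let x be a p-adic integer. Then (Σ_{k=1}^{p−1} C(2k,k) x^k) · (Σ_{k=1}^{p−1} C(2k,k) x^k / k) ≡ 2 Σ_{k=1}^{p−1} C(2k,k) (H_{2k−1} − H_k) x^k (mod p), a congruence in ℤ_p. -/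
open Finset

/-!
Write `c k = C(2k,k)`. The convolution `∑_{i+j=n, j ≥ 1} c i * c j / j` equals
`2 c n (H_{2n} - H_n)`: after multiplication by `n` both sides satisfy the same first-order
recurrence, which comes from `(i+1) c (i+1) = 2(2i+1) c i` and the Catalan convolution
`2 ∑_{i+j=n} Cat i * c j = c (n+1)`. Hence `2 c k (H_{2k-1} - H_k)` is the coefficient of `x^k`
in `(∑_{k ≥ 1} c k x^k) (∑_{k ≥ 1} c k x^k / k)`, so the left-hand side of the congruence is the
sum of the terms `c i * c j / j * x^(i+j)` with `i, j < p ≤ i + j`. In each of them `p ≤ 2i` or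
`p ≤ 2j`, so `p` divides `c i` or `c j`, while `j` is a `p`-adic unit.
-/

theorem sum_range_pow_mul_sum_range_pow {R : Type*} [CommSemiring R] (a b : ℕ → R) (x : R)
    (N : ℕ) :
    (∑ i ∈ range N, a i * x ^ i) * (∑ j ∈ range N, b j * x ^ j) =
      ∑ n ∈ range N, (∑ q ∈ antidiagonal n, a q.1 * b q.2) * x ^ n +
        ∑ i ∈ range N, ∑ j ∈ Ico (N - i) N, a i * b j * x ^ (i + j) := by
  have hsplit (i : ℕ) : ∑ j ∈ range N, a i * b j * x ^ (i + j) =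
      ∑ j ∈ range (N - i), a i * b j * x ^ (i + j) +
        ∑ j ∈ Ico (N - i) N, a i * b j * x ^ (i + j) :=
    (sum_range_add_sum_Ico _ (Nat.sub_le N i)).symm
  have hdiag (n : ℕ) : (∑ q ∈ antidiagonal n, a q.1 * b q.2) * x ^ n =
      ∑ k ∈ range (n + 1), a k * b (n - k) * x ^ (k + (n - k)) := by
    rw [Nat.sum_antidiagonal_eq_sum_range_succ_mk, sum_mul]
    refine sum_congr rfl fun k hk => ?_
    rw [Nat.add_sub_cancel' (Nat.lt_succ_iff.mp (mem_range.mp hk))]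
  calc _ = ∑ i ∈ range N, ∑ j ∈ range N, a i * b j * x ^ (i + j) := by
        rw [sum_mul_sum]
        exact sum_congr rfl fun i _ => sum_congr rfl fun j _ => by ring
    _ = _ := by
        simp only [hsplit, sum_add_distrib, hdiag]
        rw [sum_range_diag_flip N fun i j => a i * b j * x ^ (i + j)]

theorem sum_range_eq_add_sum_Icc_one {M : Type*} [AddCommMonoid M] (f : ℕ → M) {n : ℕ}
    (hn : 0 < n) : ∑ k ∈ range n, f k = f 0 + ∑ k ∈ Icc 1 (n - 1), f k := by
  rw [sum_range_eq_add_Ico f hn, Icc_sub_one_right_eq_Ico_of_not_isMin (by simpa using hn.ne')]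

namespace Nat

theorem two_mul_sum_antidiagonal_catalan_mul_centralBinom (n : ℕ) :
    2 * ∑ q ∈ antidiagonal n, catalan q.1 * q.2.centralBinom = (n + 1).centralBinom := by
  have hswap := Finset.Nat.sum_antidiagonal_swap (n := n)
    (f := fun q => catalan q.1 * ((q.2 + 1) * catalan q.2))
  calc 2 * ∑ q ∈ antidiagonal n, catalan q.1 * q.2.centralBinom
      = ∑ q ∈ antidiagonal n, (catalan q.1 * ((q.2 + 1) * catalan q.2) +
          catalan q.2 * ((q.1 + 1) * catalan q.1)) := by
        simp only [sum_add_distrib, Prod.fst_swap, Prod.snd_swap] at hswap ⊢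
        rw [hswap, ← two_mul]
        simp only [succ_mul_catalan_eq_centralBinom]
    _ = ∑ q ∈ antidiagonal n, (n + 2) * (catalan q.1 * catalan q.2) :=
        sum_congr rfl fun q hq => by rw [← mem_antidiagonal.mp hq]; ring
    _ = (n + 1).centralBinom := by
        rw [← mul_sum, ← catalan_succ', ← succ_mul_catalan_eq_centralBinom]

theorem Prime.dvd_centralBinom_mul_centralBinom {p i j : ℕ} (hp : p.Prime) (hi : i < p)
    (hj : j < p) (hij : p ≤ i + j) : p ∣ i.centralBinom * j.centralBinom := by
  simp only [centralBinom_eq_two_mul_choose, two_mul]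
  rcases le_total p (i + i) with h | h
  · exact dvd_mul_of_dvd_left (hp.dvd_choose_add hi hi h) _
  · exact dvd_mul_of_dvd_right (hp.dvd_choose_add hj hj (by omega)) _

section Field

variable {K : Type*} [Field K] [CharZero K]

theorem cast_centralBinom_succ (n : ℕ) :
    ((n + 1).centralBinom : K) = 2 * (2 * n + 1) * n.centralBinom / (n + 1) := by
  rw [eq_div_iff (Nat.cast_add_one_ne_zero n), mul_comm]
  exact_mod_cast succ_mul_centralBinom_succ n

theorem cast_catalan_eq_centralBinom_div (n : ℕ) :
    (catalan n : K) = n.centralBinom / (n + 1) := by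
  rw [eq_div_iff (Nat.cast_add_one_ne_zero n), mul_comm]
  exact_mod_cast succ_mul_catalan_eq_centralBinom n

end Field

/-- The coefficient of `x ^ n` in `(∑ c k x^k) (∑ c k x^k / k)`; the summand with `q.2 = 0`
vanishes because `c 0 / 0 = 0` in `ℚ`. -/
def centralBinomConv (n : ℕ) : ℚ :=
  ∑ q ∈ antidiagonal n, (q.1.centralBinom : ℚ) * (q.2.centralBinom / q.2)

theorem succ_mul_centralBinomConv_succ (n : ℕ) :
    (n + 1) * centralBinomConv (n + 1) =
      2 * (2 * n + 1) * centralBinomConv n + 2 * catalan n := by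
  rcases n with _ | n
  · simp [centralBinomConv, Finset.Nat.sum_antidiagonal_succ, centralBinom_eq_two_mul_choose]
  have hcat : ∑ q ∈ antidiagonal n, (catalan q.1 : ℚ) * (q.2 + 1).centralBinom =
      (n + 2).centralBinom / 2 - catalan (n + 1) := by
    have h := two_mul_sum_antidiagonal_catalan_mul_centralBinom (n + 1)
    rw [Finset.Nat.sum_antidiagonal_succ'] at h
    simp only [centralBinom_zero, mul_one] at h
    rw [eq_sub_iff_add_eq, eq_div_iff two_ne_zero]
    exact_mod_cast (by linear_combination h)
  have hterm : ∀ q ∈ antidiagonal n,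
      (n + 2 : ℚ) * ((q.1 + 1).centralBinom * ((q.2 + 1).centralBinom / (q.2 + 1 : ℕ))) =
        2 * (2 * n + 3) * (q.1.centralBinom * ((q.2 + 1).centralBinom / (q.2 + 1 : ℕ))) -
          2 * (catalan q.1 * (q.2 + 1).centralBinom) := by
    rintro ⟨i, j⟩ hq
    obtain rfl := mem_antidiagonal.mp hq
    rw [cast_centralBinom_succ i, cast_catalan_eq_centralBinom_div i]
    push_cast
    field_simp
    ring
  have hsum := sum_congr rfl hterm
  rw [← mul_sum, sum_sub_distrib, ← mul_sum, ← mul_sum, hcat] at hsum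
  have htop : (n + 2 : ℚ) * ((n + 2).centralBinom / (n + 2 : ℕ)) = (n + 2).centralBinom := by
    push_cast
    field_simp
  rw [centralBinomConv, centralBinomConv, Finset.Nat.sum_antidiagonal_succ',
    Finset.Nat.sum_antidiagonal_succ, Finset.Nat.sum_antidiagonal_succ']
  simp only [CharP.cast_eq_zero, div_zero, mul_zero, zero_add, centralBinom_zero, cast_one,
    one_mul]
  push_cast at hsum htop ⊢
  linear_combination hsum + htop

theorem centralBinomConv_eq (n : ℕ) :
    centralBinomConv n = 2 * n.centralBinom * (harmonic (2 * n) - harmonic n) := by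
  induction n with
  | zero => simp [centralBinomConv]
  | succ n ih =>
    have h := succ_mul_centralBinomConv_succ n
    rw [ih, cast_catalan_eq_centralBinom_div] at h
    rw [cast_centralBinom_succ, show 2 * (n + 1) = 2 * n + 1 + 1 by ring, harmonic_succ,
      harmonic_succ, harmonic_succ]
    rw [← mul_right_inj' (show (n + 1 : ℚ) ≠ 0 by positivity), h]
    push_cast
    field_simp
    ring

theorem two_mul_centralBinom_mul_harmonic_sub {k : ℕ} (hk : k ≠ 0) :
    2 * (k.centralBinom * (harmonic (2 * k - 1) - harmonic k)) =
      centralBinomConv k - k.centralBinom / k := by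
  obtain ⟨m, rfl⟩ := exists_eq_succ_of_ne_zero hk
  rw [centralBinomConv_eq, show 2 * (m + 1) = 2 * m + 1 + 1 by ring, harmonic_succ (2 * m + 1),
    show 2 * m + 1 + 1 - 1 = 2 * m + 1 by omega]
  push_cast
  field_simp
  ring

end Nat

theorem Padic.norm_centralBinom_mul_centralBinom_div_le {p : ℕ} [hp : Fact p.Prime] {i j : ℕ}
    (hi : i < p) (hj : j < p) (hij : p ≤ i + j) :
    ‖(i.centralBinom : ℚ_[p]) * ((j.centralBinom / j : ℚ) : ℚ_[p])‖ ≤ (p : ℝ) ^ (-1 : ℤ) := by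
  have hj_unit : ‖(j : ℚ_[p])‖ = 1 :=
    norm_natCast_eq_one_iff.mpr ((hp.out.coprime_iff_not_dvd).mpr
      (Nat.not_dvd_of_pos_of_lt (by omega) hj))
  rw [norm_le_pow_iff_norm_lt_pow_add_one, neg_add_cancel, zpow_zero, Rat.cast_div,
    Rat.cast_natCast, Rat.cast_natCast, norm_mul, norm_div, hj_unit, div_one, ← norm_mul,
    ← Nat.cast_mul]
  exact norm_natCast_lt_one_iff.mpr (hp.out.dvd_centralBinom_mul_centralBinom hi hj hij)

theorem Padic.norm_sum_centralBinom_tail_le {p : ℕ} [Fact p.Prime] {y : ℚ_[p]} (hy : ‖y‖ ≤ 1) :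
    ‖∑ i ∈ range p, ∑ j ∈ Ico (p - i) p,
        (i.centralBinom : ℚ_[p]) * ((j.centralBinom / j : ℚ) : ℚ_[p]) * y ^ (i + j)‖ ≤
      (p : ℝ) ^ (-1 : ℤ) := by
  refine IsUltrametricDist.norm_sum_le_of_forall_le_of_nonneg (by positivity) fun i hi =>
    IsUltrametricDist.norm_sum_le_of_forall_le_of_nonneg (by positivity) fun j hj => ?_
  rw [mem_range] at hi
  rw [mem_Ico] at hj
  calc _ ≤ ‖(i.centralBinom : ℚ_[p]) * ((j.centralBinom / j : ℚ) : ℚ_[p])‖ * 1 := by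
        rw [norm_mul _ (y ^ _), norm_pow]
        exact mul_le_mul_of_nonneg_left (pow_le_one₀ (norm_nonneg _) hy) (norm_nonneg _)
    _ ≤ (p : ℝ) ^ (-1 : ℤ) := by
        rw [mul_one]
        exact norm_centralBinom_mul_centralBinom_div_le hi hj.2 (by omega)

theorem two_mul_sum_Icc_centralBinom_mul_harmonic_sub {K : Type*} [Field K] [CharZero K] (y : K)
    {n : ℕ} (hn : 0 < n) :
    2 * ∑ k ∈ Icc 1 (n - 1),
        ((k.centralBinom * (harmonic (2 * k - 1) - harmonic k) : ℚ) : K) * y ^ k =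
      ∑ k ∈ range n, (∑ q ∈ antidiagonal k,
          (q.1.centralBinom : K) * ((q.2.centralBinom / q.2 : ℚ) : K)) * y ^ k -
        ∑ k ∈ range n, ((k.centralBinom / k : ℚ) : K) * y ^ k := by
  rw [sum_range_eq_add_sum_Icc_one _ hn, sum_range_eq_add_sum_Icc_one _ hn, mul_sum]
  simp only [Nat.antidiagonal_zero, sum_singleton, CharP.cast_eq_zero, div_zero, Rat.cast_zero,
    mul_zero, zero_mul, zero_add, ← sum_sub_distrib]
  refine sum_congr rfl fun k hk => ?_
  have h := congrArg (fun r : ℚ => (r : K)) <|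
    Nat.two_mul_centralBinom_mul_harmonic_sub (k := k) (by simp at hk; omega)
  simp only [Nat.centralBinomConv] at h
  push_cast at h ⊢
  rw [← mul_assoc, h, sub_mul]

theorem tauraso_lemma_general (p : ℕ) [Fact p.Prime] (x : ℤ_[p]) :
    ‖(∑ k ∈ Finset.Icc 1 (p - 1), (Nat.choose (2 * k) k : ℚ_[p]) * (x : ℚ_[p]) ^ k) *
        (∑ k ∈ Finset.Icc 1 (p - 1),
          (((Nat.choose (2 * k) k : ℚ) / k : ℚ) : ℚ_[p]) * (x : ℚ_[p]) ^ k) -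
      2 * ∑ k ∈ Finset.Icc 1 (p - 1),
          (((Nat.choose (2 * k) k : ℚ) * (harmonic (2 * k - 1) - harmonic k) : ℚ) : ℚ_[p]) *
            (x : ℚ_[p]) ^ k‖
      ≤ (p : ℝ) ^ (-1 : ℤ) := by
  have hp : 0 < p := (Fact.out : p.Prime).pos
  simp only [← Nat.centralBinom_eq_two_mul_choose]
  have hA := sum_range_eq_add_sum_Icc_one (fun k => (k.centralBinom : ℚ_[p]) * (x : ℚ_[p]) ^ k) hp
  have hB := sum_range_eq_add_sum_Icc_one
    (fun k => ((k.centralBinom / k : ℚ) : ℚ_[p]) * (x : ℚ_[p]) ^ k) hp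
  simp only [Nat.centralBinom_zero, Nat.cast_zero, div_zero, Rat.cast_zero, Nat.cast_one,
    pow_zero, mul_one, zero_add] at hA hB
  rw [two_mul_sum_Icc_centralBinom_mul_harmonic_sub _ hp, ← hB, eq_sub_of_add_eq' hA.symm,
    sub_one_mul, sub_sub_sub_cancel_right, sum_range_pow_mul_sum_range_pow, add_sub_cancel_left]
  exact Padic.norm_sum_centralBinom_tail_le (by simpa using x.norm_le_one)

/-- **Lemma 2.1 (Tauraso).** For a prime `p > 3` and `x ∈ ℤ_p`,
`(Σ_{k=1}^{p-1} C(2k,k) x^k) (Σ_{k=1}^{p-1} C(2k,k) x^k / k)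
  ≡ 2 Σ_{k=1}^{p-1} C(2k,k)(H_{2k-1} - H_k) x^k (mod p)` in `ℤ_p`. -/
theorem tauraso_lemma (p : ℕ) [Fact p.Prime] (hp : 3 < p) (x : ℤ_[p]) :
    ‖(∑ k ∈ Finset.Icc 1 (p - 1), (Nat.choose (2 * k) k : ℚ_[p]) * (x : ℚ_[p]) ^ k) *
        (∑ k ∈ Finset.Icc 1 (p - 1),
          (((Nat.choose (2 * k) k : ℚ) / k : ℚ) : ℚ_[p]) * (x : ℚ_[p]) ^ k) -
      2 * ∑ k ∈ Finset.Icc 1 (p - 1),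
          (((Nat.choose (2 * k) k : ℚ) * (harmonic (2 * k - 1) - harmonic k) : ℚ) : ℚ_[p]) *
            (x : ℚ_[p]) ^ k‖
      ≤ (p : ℝ) ^ (-1 : ℤ) :=
  tauraso_lemma_general p x
end

section
/- Let a be an even nonnegative integer and let z ∈ ℚ. Then (Σ_{k=0}^{a/2} (−a/2)_k ((a+3)/2)_k / (k!)² · z^k) · (Σ_{l=0}^{a/2} (−a/2)_l ((a+1)/2)_l / (l!)² · z^l) = Σ_{j=0}^{a} (−a)_j (a+2)_j (1/2)_j / (j!)³ · z^j. -/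
/-!
Creative telescoping. Let `f k`, `g l` be the coefficients of the two `₂F₁` factors and `T j` those
of `₃F₂(-2m, 2m+2, 1/2; 1, 1; z)`. Both `T` and the Cauchy coefficients `S j = ∑_{k+l=j} f k g l`
satisfy the three-term recurrence `A₀(j) u j + A₁(j) u (j+1) + A₂(j) u (j+2) = 0` found by
Zeilberger's algorithm, with `A₂(j) ≠ 0`: for `T` this is a check on the ratio `T (j+1) / T j`, for
`S` the recurrence applied to the summand `f k g (j-k)` telescopes in `k` against an explicit
certificate. As `S` and `T` agree at `j = 0, 1`, they coincide for every `m`. For `m ∈ ℕ` both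
factors are polynomials of degree at most `m`, so their product is the truncated `₃F₂`.
-/

open Finset Polynomial

theorem eq_of_linear_recurrence {K : Type*} [Field K] {a b c u v : ℕ → K}
    (hc : ∀ n, c n ≠ 0)
    (hu : ∀ n, a n * u n + b n * u (n + 1) + c n * u (n + 2) = 0)
    (hv : ∀ n, a n * v n + b n * v (n + 1) + c n * v (n + 2) = 0)
    (h0 : u 0 = v 0) (h1 : u 1 = v 1) : u = v := by
  suffices h : ∀ n, u n = v n ∧ u (n + 1) = v (n + 1) from funext fun n => (h n).1
  intro n
  induction n with
  | zero => exact ⟨h0, h1⟩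
  | succ n ih =>
    refine ⟨ih.2, mul_left_cancel₀ (hc n) ?_⟩
    linear_combination hu n - hv n - a n * ih.1 - b n * ih.2

section CauchyProduct

variable {R : Type*} [CommRing R]

theorem Polynomial.coeff_sum_range_C_mul_X_pow {f : ℕ → R} {m : ℕ}
    (hf : ∀ k, m < k → f k = 0) (i : ℕ) :
    (∑ k ∈ range (m + 1), C (f k) * X ^ k).coeff i = f i := by
  simp only [finsetSum_coeff, coeff_C_mul_X_pow, sum_ite_eq, mem_range]
  split_ifs with hi
  · rfl
  · exact (hf i (by omega)).symm

theorem Polynomial.natDegree_sum_range_C_mul_X_pow_le (f : ℕ → R) (m : ℕ) :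
    (∑ k ∈ range (m + 1), C (f k) * X ^ k).natDegree ≤ m :=
  natDegree_sum_le_of_forall_le _ _ fun _ hk =>
    (natDegree_C_mul_X_pow_le _ _).trans (Nat.lt_succ_iff.mp (mem_range.mp hk))

theorem sum_range_mul_sum_range_eq_sum_antidiagonal {f g : ℕ → R} {m n : ℕ}
    (hf : ∀ k, m < k → f k = 0) (hg : ∀ k, n < k → g k = 0) (z : R) :
    (∑ k ∈ range (m + 1), f k * z ^ k) * (∑ k ∈ range (n + 1), g k * z ^ k) =
      ∑ j ∈ range (m + n + 1), (∑ p ∈ antidiagonal j, f p.1 * g p.2) * z ^ j := by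
  set p := ∑ k ∈ range (m + 1), C (f k) * X ^ k
  set q := ∑ k ∈ range (n + 1), C (g k) * X ^ k
  have hdeg : (p * q).natDegree < m + n + 1 :=
    natDegree_mul_le.trans_lt (Nat.lt_succ_of_le (add_le_add
      (natDegree_sum_range_C_mul_X_pow_le f m) (natDegree_sum_range_C_mul_X_pow_le g n)))
  calc _ = (p * q).eval z := by simp [p, q, eval_finsetSum]
    _ = _ := by
      have hp : ∀ i, p.coeff i = f i := coeff_sum_range_C_mul_X_pow hf
      have hq : ∀ i, q.coeff i = g i := coeff_sum_range_C_mul_X_pow hg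
      simp only [eval_eq_sum_range' hdeg, coeff_mul, hp, hq]

end CauchyProduct

section Hypergeometric

variable {K : Type*} [Field K]

/-- The `k`-th coefficient of `₂F₁(x, y; 1; z)`. -/
noncomputable def hyperCoeff₂ (x y : K) (k : ℕ) : K :=
  (ascPochhammer K k).eval x * (ascPochhammer K k).eval y / ((k.factorial : K)) ^ 2

/-- The `k`-th coefficient of `₃F₂(x, y, w; 1, 1; z)`. -/
noncomputable def hyperCoeff₃ (x y w : K) (k : ℕ) : K :=
  (ascPochhammer K k).eval x * (ascPochhammer K k).eval y * (ascPochhammer K k).eval w /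
    ((k.factorial : K)) ^ 3

@[simp]
theorem hyperCoeff₂_zero (x y : K) : hyperCoeff₂ x y 0 = 1 := by
  simp [hyperCoeff₂]

theorem hyperCoeff₂_succ [CharZero K] (x y : K) (k : ℕ) :
    hyperCoeff₂ x y (k + 1) = hyperCoeff₂ x y k * ((x + k) * (y + k)) / ((k : K) + 1) ^ 2 := by
  have hk : (k : K) + 1 ≠ 0 := Nat.cast_add_one_ne_zero k
  simp only [hyperCoeff₂, ascPochhammer_succ_eval, Nat.factorial_succ, Nat.cast_mul,
    Nat.cast_add_one]
  field_simp

theorem hyperCoeff₂_neg_natCast_of_lt (y : K) {m k : ℕ} (h : m < k) :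
    hyperCoeff₂ (-(m : K)) y k = 0 := by
  simp [hyperCoeff₂, ascPochhammer_eval_neg_coe_nat_of_lt h]

@[simp]
theorem hyperCoeff₃_zero (x y w : K) : hyperCoeff₃ x y w 0 = 1 := by
  simp [hyperCoeff₃]

theorem hyperCoeff₃_succ [CharZero K] (x y w : K) (k : ℕ) :
    hyperCoeff₃ x y w (k + 1) =
      hyperCoeff₃ x y w k * ((x + k) * (y + k) * (w + k)) / ((k : K) + 1) ^ 3 := by
  have hk : (k : K) + 1 ≠ 0 := Nat.cast_add_one_ne_zero k
  simp only [hyperCoeff₃, ascPochhammer_succ_eval, Nat.factorial_succ, Nat.cast_mul,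
    Nat.cast_add_one]
  field_simp

end Hypergeometric

section Orr

variable {K : Type*} [Field K] [CharZero K] (m : K)

def orrRecCoeff₀ (j : K) : K := (2 * j + 1) * (2 * j + 3) * (2 * m - j) * (2 * m + j + 2)

def orrRecCoeff₁ (j : K) : K := 4 * (j + 1) * (2 * j + 3) * ((j + 1) * (j + 2) - 2 * m * (m + 1))

def orrRecCoeff₂ (j : K) : K := -4 * (j + 1) * (j + 2) ^ 3

noncomputable def orrCertificate (j : K) (k n : ℕ) : K :=
  k ^ 2 * (-(j + 2) * (8 * j ^ 2 + 16 * j + 6 + 2 * m * (j - 1) + 12 * m ^ 2 * (j + 1))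
      + (8 + 22 * j + 10 * j ^ 2 - 12 * m - 4 * m * j + 8 * m ^ 2 + 8 * m ^ 2 * j) * k
      + (4 * m - 2 * j) * k ^ 2) *
    hyperCoeff₂ (-m) (m + 3 / 2) k * hyperCoeff₂ (-m) (m + 1 / 2) n / ((n : K) + 1) ^ 2

theorem orrRec_summand_eq_certificate_sub (k n : ℕ) :
    orrRecCoeff₀ m (k + n) * (hyperCoeff₂ (-m) (m + 3 / 2) k * hyperCoeff₂ (-m) (m + 1 / 2) n)
      + orrRecCoeff₁ m (k + n) *
          (hyperCoeff₂ (-m) (m + 3 / 2) k * hyperCoeff₂ (-m) (m + 1 / 2) (n + 1))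
      + orrRecCoeff₂ ((k : K) + n) *
          (hyperCoeff₂ (-m) (m + 3 / 2) k * hyperCoeff₂ (-m) (m + 1 / 2) (n + 2))
    = orrCertificate m (k + n) (k + 1) n - orrCertificate m (k + n) k (n + 1) := by
  have hk : (k : K) + 1 ≠ 0 := Nat.cast_add_one_ne_zero k
  have hn : (n : K) + 1 ≠ 0 := Nat.cast_add_one_ne_zero n
  have hn' : (n : K) + 1 + 1 ≠ 0 := by norm_cast
  simp only [orrCertificate, hyperCoeff₂_succ, Nat.cast_add_one]
  field_simp
  simp only [orrRecCoeff₀, orrRecCoeff₁, orrRecCoeff₂]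
  ring

theorem orrCertificate_boundary (j : ℕ) :
    orrCertificate m j (j + 1) 0
      + orrRecCoeff₁ m j * (hyperCoeff₂ (-m) (m + 3 / 2) (j + 1) * hyperCoeff₂ (-m) (m + 1 / 2) 0)
      + orrRecCoeff₂ (j : K) *
          (hyperCoeff₂ (-m) (m + 3 / 2) (j + 1) * hyperCoeff₂ (-m) (m + 1 / 2) 1)
      + orrRecCoeff₂ (j : K) *
          (hyperCoeff₂ (-m) (m + 3 / 2) (j + 2) * hyperCoeff₂ (-m) (m + 1 / 2) 0) = 0 := by
  have hj : (j : K) + 1 + 1 ≠ 0 := by norm_cast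
  simp only [orrCertificate, hyperCoeff₂_succ _ _ (j + 1), hyperCoeff₂_succ _ _ 0,
    hyperCoeff₂_zero, Nat.cast_add_one, Nat.cast_zero]
  field_simp
  simp only [orrRecCoeff₁, orrRecCoeff₂]
  ring

theorem orrRecCoeff₂_natCast_ne_zero (j : ℕ) : orrRecCoeff₂ (j : K) ≠ 0 := by
  have h1 : (j : K) + 1 ≠ 0 := Nat.cast_add_one_ne_zero j
  have h2 : (j : K) + 2 ≠ 0 := by norm_cast
  simp [orrRecCoeff₂, h1, h2]

theorem hyperCoeff₃_orr_recurrence (j : ℕ) :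
    orrRecCoeff₀ m j * hyperCoeff₃ (-(2 * m)) (2 * m + 2) (1 / 2) j
      + orrRecCoeff₁ m j * hyperCoeff₃ (-(2 * m)) (2 * m + 2) (1 / 2) (j + 1)
      + orrRecCoeff₂ (j : K) * hyperCoeff₃ (-(2 * m)) (2 * m + 2) (1 / 2) (j + 2) = 0 := by
  have hj : (j : K) + 1 ≠ 0 := Nat.cast_add_one_ne_zero j
  have hj' : (j : K) + 1 + 1 ≠ 0 := by norm_cast
  simp only [hyperCoeff₃_succ, Nat.cast_add_one]
  field_simp
  simp only [orrRecCoeff₀, orrRecCoeff₁, orrRecCoeff₂]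
  ring

noncomputable def orrProductCoeff (j : ℕ) : K :=
  ∑ p ∈ antidiagonal j, hyperCoeff₂ (-m) (m + 3 / 2) p.1 * hyperCoeff₂ (-m) (m + 1 / 2) p.2

theorem orrProductCoeff_recurrence (j : ℕ) :
    orrRecCoeff₀ m j * orrProductCoeff m j + orrRecCoeff₁ m j * orrProductCoeff m (j + 1)
      + orrRecCoeff₂ (j : K) * orrProductCoeff m (j + 2) = 0 := by
  simp only [orrProductCoeff, Nat.sum_antidiagonal_eq_sum_range_succ fun a b =>
    hyperCoeff₂ (-m) (m + 3 / 2) a * hyperCoeff₂ (-m) (m + 1 / 2) b]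
  set f := hyperCoeff₂ (-m) (m + 3 / 2)
  set g := hyperCoeff₂ (-m) (m + 1 / 2)
  set F : ℕ → K := fun k => orrCertificate m j k (j + 1 - k)
  have htel : ∀ k ∈ range (j + 1),
      orrRecCoeff₀ m j * (f k * g (j - k)) + orrRecCoeff₁ m j * (f k * g (j + 1 - k))
        + orrRecCoeff₂ (j : K) * (f k * g (j + 2 - k)) = F (k + 1) - F k := by
    intro k hk
    obtain ⟨n, rfl⟩ := Nat.exists_eq_add_of_le (Nat.lt_succ_iff.mp (mem_range.mp hk))
    simp only [F, show k + n + 1 - (k + 1) = n by omega, show k + n + 1 - k = n + 1 by omega,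
      show k + n + 2 - k = n + 2 by omega, Nat.add_sub_cancel_left, Nat.cast_add]
    exact orrRec_summand_eq_certificate_sub m k n
  have hsum := sum_range_sub F (j + 1)
  rw [← sum_congr rfl htel] at hsum
  simp only [sum_add_distrib, ← mul_sum] at hsum
  have hF0 : F 0 = 0 := by simp [F, orrCertificate]
  have hFj : F (j + 1) = orrCertificate m j (j + 1) 0 := by simp [F]
  simp only [sum_range_succ _ (j + 1), sum_range_succ _ (j + 2),
    Nat.sub_self, show j + 2 - (j + 1) = 1 by omega]
  linear_combination hsum - hF0 + hFj + orrCertificate_boundary m j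

theorem orrProductCoeff_eq_hyperCoeff₃ :
    orrProductCoeff m = hyperCoeff₃ (-(2 * m)) (2 * m + 2) (1 / 2) := by
  refine eq_of_linear_recurrence orrRecCoeff₂_natCast_ne_zero (orrProductCoeff_recurrence m)
    (hyperCoeff₃_orr_recurrence m) (by simp [orrProductCoeff]) ?_
  simp [orrProductCoeff, Nat.antidiagonal_succ, hyperCoeff₂_succ, hyperCoeff₃_succ]
  ring

end Orr

theorem sum_hyperCoeff₂_mul_sum_hyperCoeff₂_eq_sum_hyperCoeff₃ {K : Type*} [Field K] [CharZero K]
    (m : ℕ) (z : K) :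
    (∑ k ∈ range (m + 1), hyperCoeff₂ (-(m : K)) (m + 3 / 2) k * z ^ k) *
        (∑ k ∈ range (m + 1), hyperCoeff₂ (-(m : K)) (m + 1 / 2) k * z ^ k) =
      ∑ j ∈ range (m + m + 1), hyperCoeff₃ (-(2 * m : K)) (2 * m + 2) (1 / 2) j * z ^ j := by
  rw [sum_range_mul_sum_range_eq_sum_antidiagonal (fun _ => hyperCoeff₂_neg_natCast_of_lt _)
    (fun _ => hyperCoeff₂_neg_natCast_of_lt _), ← orrProductCoeff_eq_hyperCoeff₃]
  rfl

/-- **Terminating case of Orr's identity (α = -a, β = a+3).** For an even `a ∈ ℕ` and `z ∈ ℚ`,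
`(Σ_{k=0}^{a/2} (-a/2)_k ((a+3)/2)_k / k!² z^k)(Σ_{l=0}^{a/2} (-a/2)_l ((a+1)/2)_l / l!² z^l)
  = Σ_{j=0}^{a} (-a)_j (a+2)_j (1/2)_j / j!³ z^j`. -/
theorem orr_terminating_nonneg (a : ℕ) (ha : Even a) (z : ℚ) :
    (∑ k ∈ Finset.range (a / 2 + 1),
        (ascPochhammer ℚ k).eval (-(a : ℚ) / 2) *
          (ascPochhammer ℚ k).eval (((a : ℚ) + 3) / 2) / ((k.factorial : ℚ))^2 * z^k) *
      (∑ l ∈ Finset.range (a / 2 + 1),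
        (ascPochhammer ℚ l).eval (-(a : ℚ) / 2) *
          (ascPochhammer ℚ l).eval (((a : ℚ) + 1) / 2) / ((l.factorial : ℚ))^2 * z^l)
    = ∑ j ∈ Finset.range (a + 1),
        (ascPochhammer ℚ j).eval (-(a : ℚ)) * (ascPochhammer ℚ j).eval ((a : ℚ) + 2) *
          (ascPochhammer ℚ j).eval (1 / 2) / ((j.factorial : ℚ))^3 * z^j := by
  obtain ⟨m, rfl⟩ := ha
  have hx : -((m + m : ℕ) : ℚ) / 2 = -(m : ℚ) := by push_cast; ring
  have hy₁ : (((m + m : ℕ) : ℚ) + 3) / 2 = m + 3 / 2 := by push_cast; ring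
  have hy₂ : (((m + m : ℕ) : ℚ) + 1) / 2 = m + 1 / 2 := by push_cast; ring
  have hx₃ : -((m + m : ℕ) : ℚ) = -(2 * m) := by push_cast; ring
  have hy₃ : ((m + m : ℕ) : ℚ) + 2 = 2 * m + 2 := by push_cast; ring
  rw [show (m + m) / 2 = m by omega, hx, hy₁, hy₂, hx₃, hy₃]
  exact sum_hyperCoeff₂_mul_sum_hyperCoeff₂_eq_sum_hyperCoeff₃ m z
end

section
/- Let m ≥ 3 be an odd integer and let z ∈ ℚ. Then (Σ_{k=0}^{(m−3)/2} (m/2)_k ((3−m)/2)_k / (k!)² · z^k) · (Σ_{l=0}^{(m−1)/2} (m/2)_l ((1−m)/2)_l / (l!)² · z^l) = Σ_{j=0}^{m−2} (m)_j (2−m)_j (1/2)_j / (j!)³ · z^j. -/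
/-!
Both sides are power series in `z` depending on `α = m`, and the coefficient identity holds for
every `α` in a field of characteristic zero; for odd `m ≥ 3` the two factors on the left terminate,
which gives the polynomial identity. The Cauchy-product coefficients `Σₖ aₖ b_{j-k}` and the
coefficients `cⱼ` on the right both satisfy one second-order recurrence
`P₂(j) u_{j+2} + P₁(j) u_{j+1} + P₀(j) u_j = 0` with `P₂(j) ≠ 0`, and they agree for `j = 0, 1`.
For `cⱼ` the recurrence is a combination of two instances of its first-order term ratio; for the
Cauchy product it comes from creative telescoping (Zeilberger's algorithm) with an explicit
rational certificate.
-/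

open Finset

theorem cauchy_product_sum_range {R : Type*} [CommSemiring R]
    {F G : ℕ → R} {Nf Ng D : ℕ} (hF : ∀ k, Nf ≤ k → F k = 0) (hG : ∀ l, Ng ≤ l → G l = 0)
    (hD : Nf + Ng ≤ D + 1) :
    (∑ i ∈ range Nf, F i) * ∑ l ∈ range Ng, G l =
      ∑ j ∈ range D, ∑ i ∈ range (j + 1), F i * G (j - i) := by
  have extend : ∀ {H : ℕ → R} {N M : ℕ}, (∀ k, N ≤ k → H k = 0) → N ≤ M →
      ∑ k ∈ range M, H k = ∑ k ∈ range N, H k := fun hH hNM =>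
    (sum_subset (range_subset_range.2 hNM) fun k _ hk => hH k (by simpa using hk)).symm
  have inner : ∀ i ∈ range D, ∑ l ∈ range (D - i), F i * G l = F i * ∑ l ∈ range Ng, G l := by
    intro i _
    rw [← mul_sum]
    by_cases hi : Nf ≤ i
    · simp [hF i hi]
    · rw [extend hG (by omega)]
  rw [sum_range_diag_flip D (fun i l => F i * G l), sum_congr rfl inner, ← sum_mul]
  by_cases hNf : Nf ≤ D
  · rw [extend hF hNf]
  · simp [show Ng = 0 by omega]

theorem cauchy_product_sum_range_pow {R : Type*} [CommSemiring R]
    {f g : ℕ → R} {Nf Ng D : ℕ} (hf : ∀ k, Nf ≤ k → f k = 0) (hg : ∀ l, Ng ≤ l → g l = 0)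
    (hD : Nf + Ng ≤ D + 1) (z : R) :
    (∑ k ∈ range Nf, f k * z ^ k) * ∑ l ∈ range Ng, g l * z ^ l =
      ∑ j ∈ range D, (∑ i ∈ range (j + 1), f i * g (j - i)) * z ^ j := by
  rw [cauchy_product_sum_range (by simp +contextual [hf]) (by simp +contextual [hg]) hD]
  refine sum_congr rfl fun j _ => ?_
  rw [sum_mul]
  refine sum_congr rfl fun i hi => ?_
  rw [← pow_mul_pow_sub z (Nat.lt_succ_iff.1 (mem_range.1 hi))]
  ring

theorem eq_of_second_order_recurrence {K : Type*} [Field K] {p₀ p₁ p₂ : ℕ → K} {u w : ℕ → K}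
    (hp₂ : ∀ j, p₂ j ≠ 0) (hu : ∀ j, p₂ j * u (j + 2) + p₁ j * u (j + 1) + p₀ j * u j = 0)
    (hw : ∀ j, p₂ j * w (j + 2) + p₁ j * w (j + 1) + p₀ j * w j = 0)
    (h₀ : u 0 = w 0) (h₁ : u 1 = w 1) : u = w := by
  suffices h : ∀ j, u j = w j ∧ u (j + 1) = w (j + 1) from funext fun j => (h j).1
  intro j
  induction j with
  | zero => exact ⟨h₀, h₁⟩
  | succ j ih =>
    refine ⟨ih.2, mul_left_cancel₀ (hp₂ j) ?_⟩
    linear_combination hu j - hw j - p₁ j * ih.2 - p₀ j * ih.1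

namespace Orr

variable {K : Type*} [Field K]

noncomputable def leftCoeff (α : K) (k : ℕ) : K :=
  (ascPochhammer K k).eval (α / 2) * (ascPochhammer K k).eval ((3 - α) / 2) /
    (k.factorial : K) ^ 2

noncomputable def rightCoeff (α : K) (l : ℕ) : K :=
  (ascPochhammer K l).eval (α / 2) * (ascPochhammer K l).eval ((1 - α) / 2) /
    (l.factorial : K) ^ 2

noncomputable def rhsCoeff (α : K) (j : ℕ) : K :=
  (ascPochhammer K j).eval α * (ascPochhammer K j).eval (2 - α) *
    (ascPochhammer K j).eval (1 / 2) / (j.factorial : K) ^ 3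

noncomputable def cauchyCoeff (α : K) (j : ℕ) : K :=
  ∑ k ∈ range (j + 1), leftCoeff α k * rightCoeff α (j - k)

@[simp] lemma leftCoeff_zero (α : K) : leftCoeff α 0 = 1 := by simp [leftCoeff]

@[simp] lemma rightCoeff_zero (α : K) : rightCoeff α 0 = 1 := by simp [rightCoeff]

@[simp] lemma rhsCoeff_zero (α : K) : rhsCoeff α 0 = 1 := by simp [rhsCoeff]

lemma leftCoeff_eq_zero {α : K} {n k : ℕ} (hα : (3 - α) / 2 = -n) (hk : n < k) :
    leftCoeff α k = 0 := by
  rw [leftCoeff, hα, ascPochhammer_eval_neg_coe_nat_of_lt hk, mul_zero, zero_div]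

lemma rightCoeff_eq_zero {α : K} {n l : ℕ} (hα : (1 - α) / 2 = -n) (hl : n < l) :
    rightCoeff α l = 0 := by
  rw [rightCoeff, hα, ascPochhammer_eval_neg_coe_nat_of_lt hl, mul_zero, zero_div]

def rhsRatio (α x : K) : K := (α + x) * (2 - α + x) * (x + 1 / 2)

def recCoeff₀ (α x : K) : K := (2 * x + 3) * rhsRatio α x

def recCoeff₁ (α x : K) : K := -(2 * x + 3) * (x + 1) ^ 3 - (2 * x + 2) * rhsRatio α (x + 1)

def recCoeff₂ (x : K) : K := 2 * (x + 1) * (x + 2) ^ 3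

def certificate (α x y : K) : K :=
  (x + α) * y ^ 2 - (5 * x ^ 2 + 11 * x + 4 + α * (x + 3) + α ^ 2 * (x + 1)) * y
    + (x + 2) * (2 * (2 * x + 1) * (2 * x + 3) - α * (x - 1) + 3 * α ^ 2 * (x + 1)) / 2

/-- With `F(j, k) = aₖ b_{j-k}` and `G(j, k) = antidifference α j k (j + 1 - k)`, the summands
satisfy `P₂(j) F(j+2, k) + P₁(j) F(j+1, k) + P₀(j) F(j, k) = G(j, k+1) - G(j, k)` for `k ≤ j`. -/
noncomputable def antidifference (α : K) (j k l : ℕ) : K :=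
  (k : K) ^ 2 * certificate α j k * leftCoeff α k * rightCoeff α l / ((l : K) + 1) ^ 2

variable [CharZero K]

lemma leftCoeff_succ (α : K) (k : ℕ) :
    leftCoeff α (k + 1) =
      leftCoeff α k * ((α / 2 + k) * ((3 - α) / 2 + k)) / ((k : K) + 1) ^ 2 := by
  simp only [leftCoeff, ascPochhammer_succ_eval, Nat.factorial_succ]
  push_cast
  field_simp

lemma rightCoeff_succ (α : K) (l : ℕ) :
    rightCoeff α (l + 1) =
      rightCoeff α l * ((α / 2 + l) * ((1 - α) / 2 + l)) / ((l : K) + 1) ^ 2 := by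
  simp only [rightCoeff, ascPochhammer_succ_eval, Nat.factorial_succ]
  push_cast
  field_simp

lemma rightCoeff_one (α : K) : rightCoeff α 1 = α / 2 * ((1 - α) / 2) := by
  simpa using rightCoeff_succ α 0

lemma rhsCoeff_succ (α : K) (j : ℕ) :
    ((j : K) + 1) ^ 3 * rhsCoeff α (j + 1) = rhsRatio α j * rhsCoeff α j := by
  simp only [rhsCoeff, rhsRatio, ascPochhammer_succ_eval, Nat.factorial_succ]
  push_cast
  field_simp
  ring

lemma recCoeff₂_natCast_ne_zero (j : ℕ) : recCoeff₂ (j : K) ≠ 0 := by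
  have h₁ : (j : K) + 1 ≠ 0 := by norm_cast
  have h₂ : (j : K) + 2 ≠ 0 := by norm_cast
  simp [recCoeff₂, h₁, h₂]

lemma rhsCoeff_recurrence (α : K) (j : ℕ) :
    recCoeff₂ (j : K) * rhsCoeff α (j + 2) + recCoeff₁ α j * rhsCoeff α (j + 1)
      + recCoeff₀ α j * rhsCoeff α j = 0 := by
  have h₁ := rhsCoeff_succ α j
  have h₂ := rhsCoeff_succ α (j + 1)
  push_cast at h₂
  simp only [recCoeff₀, recCoeff₁, recCoeff₂]
  linear_combination 2 * ((j : K) + 1) * h₂ - (2 * (j : K) + 3) * h₁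

lemma recurrence_term_eq_sub (α : K) {j k l : ℕ} (h : k + l = j) :
    recCoeff₂ (j : K) * (leftCoeff α k * rightCoeff α (l + 2))
      + recCoeff₁ α j * (leftCoeff α k * rightCoeff α (l + 1))
      + recCoeff₀ α j * (leftCoeff α k * rightCoeff α l)
      = antidifference α j (k + 1) l - antidifference α j k (l + 1) := by
  subst h
  rw [antidifference, antidifference, rightCoeff_succ α (l + 1), rightCoeff_succ α l,
    leftCoeff_succ α k]
  simp only [recCoeff₀, recCoeff₁, recCoeff₂, rhsRatio, certificate]
  have h₁ : (l : K) + 1 ≠ 0 := by norm_cast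
  have h₂ : (l : K) + 1 + 1 ≠ 0 := by norm_cast
  have h₃ : (k : K) + 1 ≠ 0 := by norm_cast
  push_cast
  field_simp
  ring

lemma recurrence_boundary (α : K) (j : ℕ) :
    recCoeff₂ (j : K) * (leftCoeff α (j + 1) * rightCoeff α 1 + leftCoeff α (j + 2))
      + recCoeff₁ α j * leftCoeff α (j + 1) = -antidifference α j (j + 1) 0 := by
  rw [leftCoeff_succ α (j + 1), rightCoeff_one, antidifference]
  simp only [recCoeff₁, recCoeff₂, rhsRatio, certificate, rightCoeff_zero]
  have h₂ : (j : K) + 1 + 1 ≠ 0 := by norm_cast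
  push_cast
  field_simp
  ring

lemma cauchyCoeff_recurrence (α : K) (j : ℕ) :
    recCoeff₂ (j : K) * cauchyCoeff α (j + 2) + recCoeff₁ α j * cauchyCoeff α (j + 1)
      + recCoeff₀ α j * cauchyCoeff α j = 0 := by
  have telescope : ∑ k ∈ range (j + 1),
      (recCoeff₂ (j : K) * (leftCoeff α k * rightCoeff α (j + 2 - k))
        + recCoeff₁ α j * (leftCoeff α k * rightCoeff α (j + 1 - k))
        + recCoeff₀ α j * (leftCoeff α k * rightCoeff α (j - k)))
      = antidifference α j (j + 1) 0 := by
    refine (sum_congr rfl fun k hk => ?_).trans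
      ((sum_range_sub (fun k => antidifference α j k (j + 1 - k)) (j + 1)).trans ?_)
    · have hkj := Nat.lt_succ_iff.1 (mem_range.1 hk)
      rw [show j + 2 - k = j - k + 2 by omega, show j + 1 - k = j - k + 1 by omega,
        show j + 1 - (k + 1) = j - k by omega]
      exact recurrence_term_eq_sub α (Nat.add_sub_cancel' hkj)
    · simp [antidifference]
  rw [sum_add_distrib, sum_add_distrib, ← mul_sum, ← mul_sum, ← mul_sum] at telescope
  simp only [cauchyCoeff, sum_range_succ _ (j + 1), sum_range_succ _ (j + 2)]
  simp only [Nat.sub_self, show j + 2 - (j + 1) = 1 by omega, rightCoeff_zero]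
  linear_combination telescope + recurrence_boundary α j

lemma cauchyCoeff_eq_rhsCoeff (α : K) : cauchyCoeff α = rhsCoeff α := by
  refine eq_of_second_order_recurrence recCoeff₂_natCast_ne_zero (cauchyCoeff_recurrence α)
    (rhsCoeff_recurrence α) (by simp [cauchyCoeff]) ?_
  simp only [cauchyCoeff, rhsCoeff, sum_range_succ]
  simp [leftCoeff, rightCoeff, ascPochhammer_one]
  ring

end Orr

open Orr in
/-- **Terminating case of Orr's identity (α = m, β = 3-m), m ≥ 3 odd.** For `z ∈ ℚ`,
`(Σ_{k=0}^{(m-3)/2} (m/2)_k ((3-m)/2)_k / k!² z^k)(Σ_{l=0}^{(m-1)/2} (m/2)_l ((1-m)/2)_l / l!² z^l)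
  = Σ_{j=0}^{m-2} (m)_j (2-m)_j (1/2)_j / j!³ z^j`. -/
theorem orr_terminating_odd (m : ℕ) (hm3 : 3 ≤ m) (hm : Odd m) (z : ℚ) :
    (∑ k ∈ Finset.range ((m - 3) / 2 + 1),
        (ascPochhammer ℚ k).eval ((m : ℚ) / 2) *
          (ascPochhammer ℚ k).eval ((3 - (m : ℚ)) / 2) / ((k.factorial : ℚ))^2 * z^k) *
      (∑ l ∈ Finset.range ((m - 1) / 2 + 1),
        (ascPochhammer ℚ l).eval ((m : ℚ) / 2) *
          (ascPochhammer ℚ l).eval ((1 - (m : ℚ)) / 2) / ((l.factorial : ℚ))^2 * z^l)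
    = ∑ j ∈ Finset.range (m - 2 + 1),
        (ascPochhammer ℚ j).eval (m : ℚ) * (ascPochhammer ℚ j).eval (2 - (m : ℚ)) *
          (ascPochhammer ℚ j).eval (1 / 2) / ((j.factorial : ℚ))^3 * z^j := by
  obtain ⟨n, rfl⟩ : ∃ n, m = 2 * n + 3 := ⟨(m - 3) / 2, by obtain ⟨r, hr⟩ := hm; omega⟩
  have hleft : (3 - ((2 * n + 3 : ℕ) : ℚ)) / 2 = -n := by push_cast; ring
  have hright : (1 - ((2 * n + 3 : ℕ) : ℚ)) / 2 = -(n + 1 : ℕ) := by push_cast; ring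
  rw [show (2 * n + 3 - 3) / 2 + 1 = n + 1 by omega, show (2 * n + 3 - 1) / 2 + 1 = n + 2 by omega,
    show 2 * n + 3 - 2 + 1 = 2 * n + 2 by omega]
  calc _ = (∑ k ∈ range (n + 1), leftCoeff ((2 * n + 3 : ℕ) : ℚ) k * z ^ k)
        * ∑ l ∈ range (n + 2), rightCoeff ((2 * n + 3 : ℕ) : ℚ) l * z ^ l := rfl
    _ = ∑ j ∈ range (2 * n + 2), cauchyCoeff ((2 * n + 3 : ℕ) : ℚ) j * z ^ j :=
        cauchy_product_sum_range_pow (fun k hk => leftCoeff_eq_zero hleft hk)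
          (fun l hl => rightCoeff_eq_zero hright hl) (by omega) z
    _ = _ := by rw [cauchyCoeff_eq_rhsCoeff]; rfl
end

section
/- For every nonnegative integer k, the following identity holds in ℚ: C(−1/3, k) · C(−2/3, k) = C(2k,k) C(3k,k) / 27^k. -/
/-!
The factors of the two falling factorials pair up as `(-1/3 - j)(-2/3 - j) = (3j+1)(3j+2)/9`, so
their product is the product of the integers up to `3k` prime to `3`, divided by `9^k`, that is
`(3k)! / (3^k k! 9^k)`. Hence the left side is `(3k)! / (k!³ 27^k)`, and `(3k)! / k!³` is the
multinomial coefficient `C(2k,k) C(3k,k)`.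
-/

open Finset

theorem descPochhammer_eval_neg_third_mul_neg_two_thirds (k : ℕ) :
    27 ^ k * k.factorial *
        ((descPochhammer ℚ k).eval (-1 / 3) * (descPochhammer ℚ k).eval (-2 / 3)) =
      (3 * k).factorial := by
  induction k with
  | zero => simp
  | succ k ih =>
    rw [descPochhammer_succ_eval, descPochhammer_succ_eval,
      show 3 * (k + 1) = 3 * k + 2 + 1 by ring]
    push_cast [Nat.factorial_succ]
    linear_combination (3 * (k : ℚ) + 1) * (3 * k + 2) * (3 * k + 3) * ih

theorem Nat.choose_two_mul_mul_choose_three_mul (k : ℕ) :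
    (2 * k).choose k * (3 * k).choose k * k.factorial ^ 3 = (3 * k).factorial := by
  have h2 := Nat.choose_mul_factorial_mul_factorial (show k ≤ 2 * k by omega)
  have h3 := Nat.choose_mul_factorial_mul_factorial (show k ≤ 3 * k by omega)
  rw [show 2 * k - k = k by omega] at h2
  rw [show 3 * k - k = 2 * k by omega, ← h2] at h3
  rw [← h3]
  ring

/-- For every `k ∈ ℕ`, `C(-1/3, k) · C(-2/3, k) = C(2k,k) C(3k,k) / 27^k` in `ℚ`. -/
theorem genBinom_third (k : ℕ) :
    genBinom (-1 / 3) k * genBinom (-2 / 3) k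
      = (Nat.choose (2 * k) k : ℚ) * (Nat.choose (3 * k) k : ℚ) / 27 ^ k := by
  have hchoose : ((2 * k).choose k * (3 * k).choose k * k.factorial ^ 3 : ℚ) =
      (3 * k).factorial := by
    exact_mod_cast Nat.choose_two_mul_mul_choose_three_mul k
  rw [genBinom, genBinom, div_mul_div_comm, eq_div_iff (by positivity),
    div_mul_eq_mul_div, div_eq_iff (by positivity)]
  refine mul_left_cancel₀ (show (k.factorial : ℚ) ≠ 0 by positivity) ?_
  linear_combination descPochhammer_eval_neg_third_mul_neg_two_thirds k - hchoose
end

section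
/- For every nonnegative integer k, the following identity holds in ℚ: C(−1/4, k) · C(−3/4, k) = C(2k,k) C(4k,2k) / 64^k. -/
/-!
Legendre's duplication formula for falling factorials, `(2x)_{2k} = 4^k (x)_k (x - 1/2)_k`,
taken at `x = -1/4` turns `(-1/4)_k (-3/4)_k` into `4^{-k} (-1/2)_{2k}`, and
`(-1/2)_n = (-1/4)^n (2n)!/n!`. What remains is `(4k)!/((2k)! k!^2) = C(2k,k) C(4k,2k)`.
-/

open Finset

open Nat

section

variable {K : Type*} [Field K] [NeZero (2 : K)]

theorem descPochhammer_eval_two_mul (x : K) (k : ℕ) :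
    (descPochhammer K (2 * k)).eval (2 * x)
      = 4 ^ k * (descPochhammer K k).eval x * (descPochhammer K k).eval (x - 2⁻¹) := by
  induction k with
  | zero => simp
  | succ k ih =>
    have two_mul_inv : (2 : K) * 2⁻¹ = 1 := mul_inv_cancel₀ two_ne_zero
    rw [show 2 * (k + 1) = 2 * k + 1 + 1 by ring]
    simp only [descPochhammer_succ_eval, ih]
    push_cast
    linear_combination 2 * 4 ^ k * (descPochhammer K k).eval x
      * (descPochhammer K k).eval (x - 2⁻¹) * (x - k) * two_mul_inv

theorem neg_four_pow_mul_factorial_mul_descPochhammer_eval_neg_half (n : ℕ) :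
    (-4) ^ n * n ! * (descPochhammer K n).eval (-2⁻¹) = (2 * n)! := by
  induction n with
  | zero => simp
  | succ n ih =>
    have two_mul_inv : (2 : K) * 2⁻¹ = 1 := mul_inv_cancel₀ two_ne_zero
    rw [show 2 * (n + 1) = 2 * n + 1 + 1 by ring, factorial_succ, factorial_succ, factorial_succ,
      descPochhammer_succ_eval]
    push_cast
    linear_combination (n + 1 : K) * (-4) * (-2⁻¹ - n) * ih
      + 2 * (n + 1) * ((2 * n)! : K) * two_mul_inv

end

theorem Nat.cast_choose_two_mul_self {K : Type*} [DivisionRing K] [CharZero K] (n : ℕ) :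
    ((2 * n).choose n : K) = (2 * n)! / (n ! * n !) := by
  rw [Nat.cast_choose K (by omega), Nat.two_mul, Nat.add_sub_cancel]

/-- For every `k ∈ ℕ`, `C(-1/4, k) · C(-3/4, k) = C(2k,k) C(4k,2k) / 64^k` in `ℚ`. -/
theorem genBinom_quarter (k : ℕ) :
    genBinom (-1 / 4) k * genBinom (-3 / 4) k
      = (Nat.choose (2 * k) k : ℚ) * (Nat.choose (4 * k) (2 * k) : ℚ) / 64 ^ k := by
  have duplication : (descPochhammer ℚ (2 * k)).eval (-2⁻¹)
      = 4 ^ k * (descPochhammer ℚ k).eval (-1 / 4) * (descPochhammer ℚ k).eval (-3 / 4) := by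
    convert descPochhammer_eval_two_mul (-1 / 4 : ℚ) k using 3 <;> norm_num
  have half := neg_four_pow_mul_factorial_mul_descPochhammer_eval_neg_half (K := ℚ) (2 * k)
  have sixty_four : (-4 : ℚ) ^ (2 * k) * 4 ^ k = 64 ^ k := by
    rw [pow_mul, ← mul_pow]
    norm_num
  rw [genBinom, genBinom, Nat.cast_choose_two_mul_self, show 4 * k = 2 * (2 * k) by ring,
    Nat.cast_choose_two_mul_self, ← half, duplication]
  field_simp
  rw [← sixty_four]
  ring
end

section
/- For every nonnegative integer k, the following identity holds in ℚ: C(−1/6, k) · C(−5/6, k) = C(6k,3k) C(3k,k) / 432^k. -/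
/-!
Both sides `a k` satisfy `a 0 = 1` and `a (k + 1) * (k + 1) ^ 2 = (k + 1/6) * (k + 5/6) * a k`.
On the left this is the ratio `C(x, k + 1) / C(x, k) = (x - k) / (k + 1)`; on the right it follows
from `C(6k, 3k) C(3k, k) = (6k)! / (k! (2k)! (3k)!)`.
-/

open Finset

open scoped Nat

theorem genBinom_succ_mul (x : ℚ) (k : ℕ) :
    genBinom x (k + 1) * (k + 1) = genBinom x k * (x - k) := by
  simp only [genBinom, descPochhammer_succ_eval, Nat.factorial_succ]
  push_cast
  field_simp

theorem genBinom_mul_genBinom_succ_mul (x y : ℚ) (k : ℕ) :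
    genBinom x (k + 1) * genBinom y (k + 1) * (k + 1) ^ 2
      = genBinom x k * genBinom y k * ((x - k) * (y - k)) := by
  linear_combination genBinom y (k + 1) * (k + 1) * genBinom_succ_mul x k
    + genBinom x k * (x - k) * genBinom_succ_mul y k

theorem cast_choose_mul_choose {K : Type*} [Field K] [CharZero K] {i j n : ℕ}
    (hij : i ≤ j) (hjn : j ≤ n) :
    (n.choose j * j.choose i : K) = n ! / (i ! * (j - i)! * (n - j)!) := by
  rw [Nat.cast_choose K hjn, Nat.cast_choose K hij]
  have hj : (j ! : K) ≠ 0 := Nat.cast_ne_zero.2 j.factorial_ne_zero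
  field_simp

theorem choose_six_mul_choose_three_succ_mul (k : ℕ) :
    ((6 * (k + 1)).choose (3 * (k + 1)) * (3 * (k + 1)).choose (k + 1) : ℚ) * (k + 1) ^ 2
      = (6 * k).choose (3 * k) * (3 * k).choose k * (12 * ((6 * k + 1) * (6 * k + 5))) := by
  rw [cast_choose_mul_choose (by omega) (by omega), cast_choose_mul_choose (by omega) (by omega),
    show 3 * (k + 1) - (k + 1) = 2 * k + 2 by omega,
    show 6 * (k + 1) - 3 * (k + 1) = 3 * k + 3 by omega,
    show 3 * k - k = 2 * k by omega, show 6 * k - 3 * k = 3 * k by omega,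
    show 6 * (k + 1) = 6 * k + 6 by ring]
  simp only [Nat.factorial_succ]
  push_cast
  field_simp
  ring

/-- For every `k ∈ ℕ`, `C(-1/6, k) · C(-5/6, k) = C(6k,3k) C(3k,k) / 432^k` in `ℚ`. -/
theorem genBinom_sixth (k : ℕ) :
    genBinom (-1 / 6) k * genBinom (-5 / 6) k
      = (Nat.choose (6 * k) (3 * k) : ℚ) * (Nat.choose (3 * k) k : ℚ) / 432 ^ k := by
  induction k with
  | zero => simp [genBinom]
  | succ k ih =>
    apply mul_right_cancel₀ (pow_ne_zero 2 k.cast_add_one_ne_zero)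
    rw [genBinom_mul_genBinom_succ_mul, ih, div_mul_eq_mul_div _ ((432 : ℚ) ^ (k + 1)),
      choose_six_mul_choose_three_succ_mul]
    field_simp
    ring
end
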